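/- arXiv:1506.06244 — 10 statements merged into one kernel-verified Lean document; each statement's English description precedes it below -/
import Mathlib

section
/- Let (H_i, d_i)_{i∈ℤ} be a cochain complex of complex Hilbert spaces. Suppose that for every i ∈ ℤ the range of the Laplace operator Δ_i is a closed subspace of H_i. Then for every i ∈ ℤ the space H_i is the internal orthogonal direct sum of the three subspaces range(d_{i-1}), range((d_i)*) and ker(Δ_i); that is, these three subspaces are pairwise orthogonal and every element of H_i is the sum of an element of each of them. -/
open scoped ComplexInnerProductSpace

/-- The `i`-th Laplace operator of a cochain complex `(H i, d i)` of complex Hilbert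
spaces, acting on `H (i+1)`: `Δ_{i+1} = d_i ∘ (d_i)* + (d_{i+1})* ∘ d_{i+1}`. -/
noncomputable def Lap (H : ℤ → Type*) [∀ i, NormedAddCommGroup (H i)]
    [∀ i, InnerProductSpace ℂ (H i)] [∀ i, CompleteSpace (H i)]
    (d : ∀ i, H i →L[ℂ] H (i + 1)) (i : ℤ) : H (i + 1) →L[ℂ] H (i + 1) :=
  (d i).comp (ContinuousLinearMap.adjoint (d i)) +
    (ContinuousLinearMap.adjoint (d (i + 1))).comp (d (i + 1))

open ContinuousLinearMap in
lemma lap_ker (H : ℤ → Type*) [∀ i, NormedAddCommGroup (H i)]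
    [∀ i, InnerProductSpace ℂ (H i)] [∀ i, CompleteSpace (H i)]
    (d : ∀ i, H i →L[ℂ] H (i + 1)) (i : ℤ) (z : H (i + 1))
    (hz : Lap H d i z = 0) : adjoint (d i) z = 0 ∧ d (i + 1) z = 0 := by
  have h : (⟪adjoint (d i) z, adjoint (d i) z⟫ : ℂ) + ⟪d (i+1) z, d (i+1) z⟫ = 0 := by
    have h0 := congrArg (fun w => (⟪z, w⟫ : ℂ)) hz
    simp only [Lap, ContinuousLinearMap.add_apply, ContinuousLinearMap.comp_apply,
      inner_add_right, inner_zero_right] at h0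
    rw [← adjoint_inner_left (d i) (adjoint (d i) z) z,
      adjoint_inner_right (d (i+1)) z (d (i+1) z)] at h0
    exact h0
  have h1 : (‖adjoint (d i) z‖ : ℝ)^2 + (‖d (i+1) z‖ : ℝ)^2 = 0 := by
    have := congrArg Complex.re h
    rw [← inner_self_eq_norm_sq (𝕜 := ℂ) (adjoint (d i) z), ← inner_self_eq_norm_sq (𝕜 := ℂ) (d (i+1) z)]
    simpa [← RCLike.re_to_complex] using this
  constructor
  · have : ‖adjoint (d i) z‖ = 0 := by nlinarith [sq_nonneg ‖adjoint (d i) z‖, sq_nonneg ‖d (i+1) z‖, norm_nonneg (adjoint (d i) z), norm_nonneg (d (i+1) z)]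
    simpa using this
  · have : ‖d (i+1) z‖ = 0 := by nlinarith [sq_nonneg ‖adjoint (d i) z‖, sq_nonneg ‖d (i+1) z‖, norm_nonneg (adjoint (d i) z), norm_nonneg (d (i+1) z)]
    simpa using this

/-- If the range of every Laplace operator of a cochain complex of complex Hilbert spaces
is closed, then each `H i` is the internal orthogonal direct sum of `range d_{i-1}`,
`range (d_i)*` and `ker Δ_i`. -/
theorem stmt0 (H : ℤ → Type*) [∀ i, NormedAddCommGroup (H i)]
    [∀ i, InnerProductSpace ℂ (H i)] [∀ i, CompleteSpace (H i)]
    (d : ∀ i, H i →L[ℂ] H (i + 1))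
    (hd : ∀ i, (d (i + 1)).comp (d i) = 0)
    (hclosed : ∀ i : ℤ, IsClosed (Set.range (Lap H d i))) :
    ∀ i : ℤ,
      (∀ x ∈ LinearMap.range (d i : H i →ₗ[ℂ] H (i + 1)),
        ∀ y ∈ LinearMap.range (ContinuousLinearMap.adjoint (d (i + 1)) : H (i + 1 + 1) →ₗ[ℂ] H (i + 1)),
          ⟪x, y⟫ = 0) ∧
      (∀ x ∈ LinearMap.range (d i : H i →ₗ[ℂ] H (i + 1)), ∀ z ∈ LinearMap.ker (Lap H d i : H (i + 1) →ₗ[ℂ] H (i + 1)), ⟪x, z⟫ = 0) ∧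
      (∀ y ∈ LinearMap.range (ContinuousLinearMap.adjoint (d (i + 1)) : H (i + 1 + 1) →ₗ[ℂ] H (i + 1)),
        ∀ z ∈ LinearMap.ker (Lap H d i : H (i + 1) →ₗ[ℂ] H (i + 1)), ⟪y, z⟫ = 0) ∧
      (∀ u : H (i + 1),
        ∃ x ∈ LinearMap.range (d i : H i →ₗ[ℂ] H (i + 1)),
          ∃ y ∈ LinearMap.range (ContinuousLinearMap.adjoint (d (i + 1)) : H (i + 1 + 1) →ₗ[ℂ] H (i + 1)),
            ∃ z ∈ LinearMap.ker (Lap H d i : H (i + 1) →ₗ[ℂ] H (i + 1)), u = x + y + z) := by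
  intro i
  open ContinuousLinearMap in
  refine ⟨?_, ?_, ?_, ?_⟩
  · rintro x ⟨a, rfl⟩ y ⟨b, rfl⟩
    simp only [ContinuousLinearMap.coe_coe]
    rw [adjoint_inner_right]
    have : d (i+1) (d i a) = 0 := by
      have := congrArg (fun f => f a) (hd i); simpa using this
    simp [this]
  · rintro x ⟨a, rfl⟩ z hz
    obtain ⟨h1, _⟩ := lap_ker H d i z (LinearMap.mem_ker.mp hz)
    simp only [ContinuousLinearMap.coe_coe]
    rw [← adjoint_inner_right, h1, inner_zero_right]
  · rintro y ⟨b, rfl⟩ z hz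
    obtain ⟨_, h2⟩ := lap_ker H d i z (LinearMap.mem_ker.mp hz)
    simp only [ContinuousLinearMap.coe_coe]
    rw [adjoint_inner_left, h2, inner_zero_right]
  · intro u
    set K : Submodule ℂ (H (i+1)) := LinearMap.range (Lap H d i : H (i+1) →ₗ[ℂ] H (i+1)) with hK
    have hKc : IsClosed (K : Set (H (i+1))) := by
      have : (K : Set (H (i+1))) = Set.range (Lap H d i) := by
        ext v; simp [hK, LinearMap.mem_range, Set.mem_range]
      rw [this]; exact hclosed i
    haveI : CompleteSpace K := hKc.completeSpace_coe
    obtain ⟨v, hv, z, hz, rfl⟩ := K.exists_add_mem_mem_orthogonal u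
    obtain ⟨w, rfl⟩ := hv
    have hzker : Lap H d i z = 0 := by
      have hsa : ∀ v : H (i+1), (⟪v, Lap H d i z⟫ : ℂ) = 0 := by
        intro v
        have : (⟪Lap H d i v, z⟫ : ℂ) = 0 := hz _ ⟨v, rfl⟩
        calc (⟪v, Lap H d i z⟫ : ℂ) = ⟪Lap H d i v, z⟫ := by
              simp only [Lap, ContinuousLinearMap.add_apply,
                ContinuousLinearMap.comp_apply, inner_add_right, inner_add_left]
              rw [← adjoint_inner_left (d i) (adjoint (d i) z) v,
                adjoint_inner_right (d i) (adjoint (d i) v) z,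
                adjoint_inner_right (d (i+1)) v (d (i+1) z),
                ← adjoint_inner_left (d (i+1)) z (d (i+1) v)]
          _ = 0 := this
      have := hsa (Lap H d i z)
      rwa [inner_self_eq_zero] at this
    refine ⟨d i (adjoint (d i) w), ⟨_, rfl⟩, adjoint (d (i+1)) (d (i+1) w), ⟨_, rfl⟩,
      z, LinearMap.mem_ker.mpr hzker, ?_⟩
    simp [Lap]
end

section
/- Let (H_i, d_i)_{i∈ℤ} be a cochain complex of complex Hilbert spaces and let i ∈ ℤ. The subspaces range(d_{i-1}) and range((d_i)*) of H_i are orthogonal to each other, and if the range of Δ_i is closed, then range(Δ_i) = range(d_{i-1}) + range((d_i)*); in particular range(Δ_i) is the orthogonal direct sum of range(d_{i-1}) and range((d_i)*). -/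
open scoped ComplexInnerProductSpace

/-- The ranges of `d_{i-1}` and of `(d_i)*` are orthogonal, and if the range of the
Laplacian `Δ_i` is closed, then `range Δ_i = range d_{i-1} + range (d_i)*`. -/
theorem stmt2 (H : ℤ → Type*) [∀ i, NormedAddCommGroup (H i)]
    [∀ i, InnerProductSpace ℂ (H i)] [∀ i, CompleteSpace (H i)]
    (d : ∀ i, H i →L[ℂ] H (i + 1))
    (hd : ∀ i, (d (i + 1)).comp (d i) = 0) (i : ℤ) :
    (∀ x ∈ LinearMap.range (d i : H i →ₗ[ℂ] H (i + 1)),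
      ∀ y ∈ LinearMap.range (ContinuousLinearMap.adjoint (d (i + 1)) : H (i + 1 + 1) →ₗ[ℂ] H (i + 1)), ⟪x, y⟫ = 0) ∧
    (IsClosed (Set.range (Lap H d i)) →
      LinearMap.range (Lap H d i : H (i + 1) →ₗ[ℂ] H (i + 1))
        = LinearMap.range (d i : H i →ₗ[ℂ] H (i + 1)) ⊔ LinearMap.range (ContinuousLinearMap.adjoint (d (i + 1)) : H (i + 1 + 1) →ₗ[ℂ] H (i + 1))) := by
  set A := d i with hA
  set B := d (i + 1) with hB
  have hBA : ∀ a, B (A a) = 0 := by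
    intro a
    have := hd i
    rw [← hA, ← hB] at this
    calc B (A a) = (B.comp A) a := rfl
    _ = 0 := by rw [this]; rfl
  constructor
  · rintro x ⟨a, rfl⟩ y ⟨b, rfl⟩
    rw [ContinuousLinearMap.coe_coe, ContinuousLinearMap.coe_coe, ContinuousLinearMap.adjoint_inner_right, hBA, inner_zero_left]
  · intro hcl
    set Δ := Lap H d i with hΔdef
    have hΔapp : ∀ z, Δ z = A (ContinuousLinearMap.adjoint A z)
        + ContinuousLinearMap.adjoint B (B z) := fun z => rfl
    -- self-adjointness of Δ
    have hself : ∀ x z : H (i + 1), ⟪Δ x, z⟫ = ⟪x, Δ z⟫ := by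
      intro x z
      rw [hΔapp, hΔapp, inner_add_left, inner_add_right]
      congr 1
      · rw [← ContinuousLinearMap.adjoint_inner_right, ContinuousLinearMap.adjoint_inner_left]
      · rw [ContinuousLinearMap.adjoint_inner_left, ContinuousLinearMap.adjoint_inner_right]
    -- kernel characterization
    have hker : ∀ z, Δ z = 0 → ContinuousLinearMap.adjoint A z = 0 ∧ B z = 0 := by
      intro z hz
      have h0 : (0 : ℂ) = ⟪Δ z, z⟫ := by rw [hz, inner_zero_left]
      rw [hΔapp, inner_add_left, ContinuousLinearMap.adjoint_inner_left,
        ← ContinuousLinearMap.adjoint_inner_right] at h0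
      rw [inner_self_eq_norm_sq_to_K, inner_self_eq_norm_sq_to_K] at h0
      have hre : (0 : ℝ) = ‖ContinuousLinearMap.adjoint A z‖ ^ 2 + ‖B z‖ ^ 2 := by
        have := congrArg Complex.re h0
        simpa [← Complex.ofReal_pow] using this
      have h1 : ‖ContinuousLinearMap.adjoint A z‖ ^ 2 = 0 ∧ ‖B z‖ ^ 2 = 0 := by
        have ha := sq_nonneg ‖ContinuousLinearMap.adjoint A z‖
        have hb := sq_nonneg ‖B z‖
        constructor <;> linarith
      constructor
      · have := h1.1
        rwa [pow_eq_zero_iff two_ne_zero, norm_eq_zero] at this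
      · have := h1.2
        rwa [pow_eq_zero_iff two_ne_zero, norm_eq_zero] at this
    -- range Δ = (ker Δ)ᗮ
    have hclosed : IsClosed ((LinearMap.range (Δ : H (i + 1) →ₗ[ℂ] H (i + 1)) : Submodule ℂ (H (i + 1))) : Set (H (i + 1))) := by
      have : ((LinearMap.range (Δ : H (i + 1) →ₗ[ℂ] H (i + 1)) : Submodule ℂ (H (i + 1))) : Set (H (i + 1)))
          = Set.range Δ := LinearMap.coe_range _
      rw [this]; exact hcl
    haveI : CompleteSpace (LinearMap.range (Δ : H (i + 1) →ₗ[ℂ] H (i + 1)) : Submodule ℂ (H (i + 1))) :=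
      hclosed.completeSpace_coe
    have horth : (LinearMap.range (Δ : H (i + 1) →ₗ[ℂ] H (i + 1)))ᗮ = LinearMap.ker (Δ : H (i + 1) →ₗ[ℂ] H (i + 1)) := by
      ext z
      rw [Submodule.mem_orthogonal, LinearMap.mem_ker]
      constructor
      · intro h
        have h2 : ∀ x, ⟪x, Δ z⟫ = 0 := by
          intro x
          rw [← hself]
          exact h (Δ x) ⟨x, rfl⟩
        exact inner_self_eq_zero.mp (h2 (Δ z))
      · rintro h u ⟨x, rfl⟩
        rw [ContinuousLinearMap.coe_coe, hself, show Δ z = 0 from h, inner_zero_right]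
    have hrange : LinearMap.range (Δ : H (i + 1) →ₗ[ℂ] H (i + 1)) = (LinearMap.ker (Δ : H (i + 1) →ₗ[ℂ] H (i + 1)))ᗮ := by
      rw [← horth, Submodule.orthogonal_orthogonal]
    apply le_antisymm
    · rintro _ ⟨z, rfl⟩
      rw [ContinuousLinearMap.coe_coe, hΔapp]
      exact Submodule.add_mem _ (Submodule.mem_sup_left ⟨_, rfl⟩)
        (Submodule.mem_sup_right ⟨_, rfl⟩)
    · rw [hrange]
      apply sup_le
      · rintro _ ⟨a, rfl⟩
        rw [Submodule.mem_orthogonal]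
        rintro z hz
        rw [LinearMap.mem_ker] at hz
        rw [ContinuousLinearMap.coe_coe, ← ContinuousLinearMap.adjoint_inner_left, (hker z hz).1, inner_zero_left]
      · rintro _ ⟨b, rfl⟩
        rw [Submodule.mem_orthogonal]
        rintro z hz
        rw [LinearMap.mem_ker] at hz
        rw [ContinuousLinearMap.coe_coe, ContinuousLinearMap.adjoint_inner_right, (hker z hz).2, inner_zero_left]
end

section
/- Let (H_i, d_i)_{i∈ℤ} be a cochain complex of complex Hilbert spaces and let i ∈ ℤ. If the range of the Laplace operator Δ_i is closed, then range(d_{i-1}) and range((d_i)*) are closed subspaces of H_i. -/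
open scoped ComplexInnerProductSpace

open ContinuousLinearMap in
lemma aux_closed_range {E F G : Type*}
    [NormedAddCommGroup E] [NormedAddCommGroup F] [NormedAddCommGroup G]
    [InnerProductSpace ℂ E] [InnerProductSpace ℂ F] [InnerProductSpace ℂ G]
    [CompleteSpace E] [CompleteSpace F] [CompleteSpace G]
    (T : E →L[ℂ] F) (S : F →L[ℂ] G) (hST : S.comp T = 0)
    (hcl : IsClosed (Set.range (T.comp (adjoint T) + (adjoint S).comp S))) :
    IsClosed (Set.range T) := by
  set Δ : F →L[ℂ] F := T.comp (adjoint T) + (adjoint S).comp S with hΔ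
  -- inner product identity
  have hinner : ∀ z : F, ⟪Δ z, z⟫ = ⟪adjoint T z, adjoint T z⟫ + ⟪S z, S z⟫ := by
    intro z
    simp only [hΔ, add_apply, comp_apply, inner_add_left]
    congr 1
    · calc ⟪T (adjoint T z), z⟫
          = ⟪(adjoint (adjoint T)) (adjoint T z), z⟫ := by rw [adjoint_adjoint]
        _ = ⟪adjoint T z, adjoint T z⟫ := adjoint_inner_left _ _ _
    · exact adjoint_inner_left _ _ _
  -- kernel of Δ is contained in the kernels of T† and S
  have hker : ∀ z : F, Δ z = 0 → adjoint T z = 0 ∧ S z = 0 := by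
    intro z hz
    have h0 : ⟪adjoint T z, adjoint T z⟫ + ⟪S z, S z⟫ = 0 := by
      rw [← hinner, hz, inner_zero_left]
    rw [inner_self_eq_norm_sq_to_K, inner_self_eq_norm_sq_to_K] at h0
    simp only [← RCLike.ofReal_pow, ← RCLike.ofReal_add, RCLike.ofReal_eq_zero] at h0
    have h0' : ‖adjoint T z‖ ^ 2 + ‖S z‖ ^ 2 = 0 := h0
    have hnn1 : (0:ℝ) ≤ ‖adjoint T z‖ ^ 2 := sq_nonneg _
    have hnn2 : (0:ℝ) ≤ ‖S z‖ ^ 2 := sq_nonneg _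
    have h1 : ‖adjoint T z‖ ^ 2 = 0 := by linarith
    have h2 : ‖S z‖ ^ 2 = 0 := by linarith
    exact ⟨norm_eq_zero.mp ((pow_eq_zero_iff two_ne_zero).mp h1),
      norm_eq_zero.mp ((pow_eq_zero_iff two_ne_zero).mp h2)⟩
  -- Δ is formally self-adjoint
  have hsa : ∀ x z : F, ⟪Δ x, z⟫ = ⟪x, Δ z⟫ := by
    intro x z
    simp only [hΔ, add_apply, comp_apply, inner_add_left, inner_add_right]
    congr 1
    · calc ⟪T (adjoint T x), z⟫
          = ⟪(adjoint (adjoint T)) (adjoint T x), z⟫ := by rw [adjoint_adjoint]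
        _ = ⟪adjoint T x, adjoint T z⟫ := adjoint_inner_left _ _ _
        _ = ⟪x, T (adjoint T z)⟫ := adjoint_inner_left _ _ _
    · calc ⟪(adjoint S) (S x), z⟫
          = ⟪S x, S z⟫ := adjoint_inner_left _ _ _
        _ = ⟪x, (adjoint S) (S z)⟫ := (adjoint_inner_right _ _ _).symm
  -- it suffices that the closure of the range is contained in the range
  refine isClosed_of_closure_subset ?_
  intro y hy
  -- T† vanishing implies orthogonality to y
  have horth : ∀ z : F, adjoint T z = 0 → ⟪z, y⟫ = 0 := by
    intro z hz
    have hclosedset : IsClosed {w : F | ⟪z, w⟫ = 0} :=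
      isClosed_eq (continuous_const.inner continuous_id) continuous_const
    have hsub : Set.range T ⊆ {w : F | ⟪z, w⟫ = 0} := by
      rintro _ ⟨v, rfl⟩
      have h1 : ⟪T v, z⟫ = 0 := by
        rw [← ContinuousLinearMap.adjoint_inner_right, hz, inner_zero_right]
      show ⟪z, T v⟫ = 0
      rw [← inner_conj_symm, h1, map_zero]
    exact hclosedset.closure_subset_iff.mpr hsub hy
  -- y lies in the double orthogonal complement of range Δ
  set K : Submodule ℂ F := LinearMap.range ((Δ : F →L[ℂ] F) : F →ₗ[ℂ] F) with hK
  have hyK : y ∈ Kᗮᗮ := by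
    rw [Submodule.mem_orthogonal]
    intro z hz
    -- z ⊥ range Δ implies Δ z = 0
    have hΔz : Δ z = 0 := by
      have hz' : ∀ x : F, ⟪x, Δ z⟫ = 0 := by
        intro x
        rw [← hsa]
        exact (Submodule.mem_orthogonal K z).mp hz (Δ x) (LinearMap.mem_range_self _ x)
      have := hz' (Δ z)
      rwa [inner_self_eq_zero] at this
    exact horth z (hker z hΔz).1
  have hKclosed : IsClosed (K : Set F) := by
    have : (K : Set F) = Set.range (Δ : F →L[ℂ] F) := by
      ext w; simp [hK, LinearMap.mem_range, Set.mem_range]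
    rw [this]; exact hcl
  rw [Submodule.orthogonal_orthogonal_eq_closure] at hyK
  have hyK' : y ∈ K := by
    rwa [hKclosed.submodule_topologicalClosure_eq] at hyK
  obtain ⟨x, hx⟩ := hyK'
  -- y = T T† x + S† S x ; show S† S x = 0
  set w : F := (adjoint S) (S x) with hw
  have hdecomp : y = T (adjoint T x) + w := by
    rw [← hx]; simp [hΔ, hw]
  have hwT : ∀ v : E, ⟪w, T v⟫ = 0 := by
    intro v
    have h1 : ⟪T v, w⟫ = 0 := by
      rw [hw, ContinuousLinearMap.adjoint_inner_right]
      have : S (T v) = 0 := by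
        have := congrFun (congrArg DFunLike.coe hST) v
        simpa using this
      rw [this, inner_zero_left]
    rw [← inner_conj_symm, h1, map_zero]
  have hwy : ⟪w, y⟫ = 0 := by
    have hclosedset : IsClosed {u : F | ⟪w, u⟫ = 0} :=
      isClosed_eq (continuous_const.inner continuous_id) continuous_const
    have hsub : Set.range T ⊆ {u : F | ⟪w, u⟫ = 0} := by
      rintro _ ⟨v, rfl⟩; exact hwT v
    exact hclosedset.closure_subset_iff.mpr hsub hy
  have hw0 : w = 0 := by
    have : ⟪w, w⟫ = 0 := by
      have : ⟪w, y - T (adjoint T x)⟫ = 0 := by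
        rw [inner_sub_right, hwy, hwT, sub_zero]
      rwa [hdecomp, add_sub_cancel_left] at this
    rwa [inner_self_eq_zero] at this
  exact ⟨adjoint T x, by rw [hdecomp, hw0, add_zero]⟩

/-- If the Laplacian `Δ_i` has closed range, then `range d_{i-1}` and `range (d_i)*`
are closed subspaces of `H_i`. -/
theorem stmt3 (H : ℤ → Type*) [∀ i, NormedAddCommGroup (H i)]
    [∀ i, InnerProductSpace ℂ (H i)] [∀ i, CompleteSpace (H i)]
    (d : ∀ i, H i →L[ℂ] H (i + 1))
    (hd : ∀ i, (d (i + 1)).comp (d i) = 0) (i : ℤ)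
    (hclosed : IsClosed (Set.range (Lap H d i))) :
    IsClosed (Set.range (d i)) ∧
      IsClosed (Set.range (ContinuousLinearMap.adjoint (d (i + 1)))) := by
  constructor
  · exact aux_closed_range (d i) (d (i + 1)) (hd i) hclosed
  · have hST : (ContinuousLinearMap.adjoint (d i)).comp
        (ContinuousLinearMap.adjoint (d (i + 1))) = 0 := by
      rw [← ContinuousLinearMap.adjoint_comp, hd i]
      simp
    have hΔeq : (ContinuousLinearMap.adjoint (d (i + 1))).comp
          (ContinuousLinearMap.adjoint (ContinuousLinearMap.adjoint (d (i + 1)))) +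
        (ContinuousLinearMap.adjoint (ContinuousLinearMap.adjoint (d i))).comp
          (ContinuousLinearMap.adjoint (d i)) = Lap H d i := by
      rw [ContinuousLinearMap.adjoint_adjoint, ContinuousLinearMap.adjoint_adjoint, Lap]
      exact add_comm _ _
    exact aux_closed_range (ContinuousLinearMap.adjoint (d (i + 1)))
      (ContinuousLinearMap.adjoint (d i)) hST (by rw [hΔeq]; exact hclosed)
end

section
/- Let (H_i, d_i)_{i∈ℤ} be a cochain complex of complex Hilbert spaces. Suppose that for every i ∈ ℤ the Hodge decomposition holds at i, i.e., the subspaces range(d_{i-1}), range((d_i)*) and ker(Δ_i) of H_i are pairwise orthogonal and their algebraic sum is all of H_i. Then for every i ∈ ℤ the range of Δ_i is a closed subspace of H_i, and consequently there exist a bounded linear operator G_i : H_i → H_i and a bounded self-adjoint operator P_i : H_i → H_i such that G_i Δ_i + P_i = 1, Δ_i G_i + P_i = 1 and Δ_i P_i = 0. -/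
open scoped ComplexInnerProductSpace

set_option maxHeartbeats 1000000 in
/-- If the Hodge decomposition holds at every index of a cochain complex of complex
Hilbert spaces, then every Laplacian has closed range, and hence is self-adjoint
parametrix possessing. -/
theorem stmt5 (H : ℤ → Type*) [∀ i, NormedAddCommGroup (H i)]
    [∀ i, InnerProductSpace ℂ (H i)] [∀ i, CompleteSpace (H i)]
    (d : ∀ i, H i →L[ℂ] H (i + 1))
    (hd : ∀ i, (d (i + 1)).comp (d i) = 0)
    (hodge : ∀ i : ℤ,
      (∀ x ∈ LinearMap.range (d i : H i →ₗ[ℂ] H (i + 1)),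
        ∀ y ∈ LinearMap.range (ContinuousLinearMap.adjoint (d (i + 1)) : H (i + 1 + 1) →ₗ[ℂ] H (i + 1)), ⟪x, y⟫ = 0) ∧
      (∀ x ∈ LinearMap.range (d i : H i →ₗ[ℂ] H (i + 1)), ∀ z ∈ LinearMap.ker (Lap H d i : H (i + 1) →ₗ[ℂ] H (i + 1)), ⟪x, z⟫ = 0) ∧
      (∀ y ∈ LinearMap.range (ContinuousLinearMap.adjoint (d (i + 1)) : H (i + 1 + 1) →ₗ[ℂ] H (i + 1)),
        ∀ z ∈ LinearMap.ker (Lap H d i : H (i + 1) →ₗ[ℂ] H (i + 1)), ⟪y, z⟫ = 0) ∧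
      (∀ u : H (i + 1),
        ∃ x ∈ LinearMap.range (d i : H i →ₗ[ℂ] H (i + 1)),
          ∃ y ∈ LinearMap.range (ContinuousLinearMap.adjoint (d (i + 1)) : H (i + 1 + 1) →ₗ[ℂ] H (i + 1)),
            ∃ z ∈ LinearMap.ker (Lap H d i : H (i + 1) →ₗ[ℂ] H (i + 1)), u = x + y + z)) :
    ∀ i : ℤ, IsClosed (Set.range (Lap H d i)) ∧
      ∃ (G P : H (i + 1) →L[ℂ] H (i + 1)), IsSelfAdjoint P ∧
        G * Lap H d i + P = 1 ∧ Lap H d i * G + P = 1 ∧ Lap H d i * P = 0 := by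
  classical
  -- elements of the kernel of the Laplacian are killed by `d†` and by `d`
  have kerlem : ∀ j : ℤ, ∀ z : H (j + 1), z ∈ LinearMap.ker (Lap H d j : H (j + 1) →ₗ[ℂ] H (j + 1)) →
      ContinuousLinearMap.adjoint (d j) z = 0 ∧ d (j + 1) z = 0 := by
    intro j z hz
    have hz0 : Lap H d j z = 0 := hz
    have key : (0 : ℂ) = ⟪ContinuousLinearMap.adjoint (d j) z, ContinuousLinearMap.adjoint (d j) z⟫
        + ⟪d (j + 1) z, d (j + 1) z⟫ := by
      calc (0 : ℂ) = ⟪z, Lap H d j z⟫ := by rw [hz0]; simp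
        _ = ⟪z, d j (ContinuousLinearMap.adjoint (d j) z)⟫
            + ⟪z, ContinuousLinearMap.adjoint (d (j + 1)) (d (j + 1) z)⟫ := by
            simp [Lap, inner_add_right]
        _ = _ := by
            rw [ContinuousLinearMap.adjoint_inner_right]
            congr 1
            conv_lhs => rw [← ContinuousLinearMap.adjoint_adjoint (d j)]
            rw [ContinuousLinearMap.adjoint_inner_right, ContinuousLinearMap.adjoint_adjoint]
    rw [inner_self_eq_norm_sq_to_K, inner_self_eq_norm_sq_to_K] at key
    have h2 : ‖ContinuousLinearMap.adjoint (d j) z‖ ^ 2 + ‖d (j + 1) z‖ ^ 2 = (0 : ℝ) := by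
      have h : ((‖ContinuousLinearMap.adjoint (d j) z‖ ^ 2 + ‖d (j + 1) z‖ ^ 2 : ℝ) : ℂ)
          = ((0 : ℝ) : ℂ) := by push_cast; exact key.symm
      exact_mod_cast h
    constructor <;> rw [← norm_eq_zero] <;>
      nlinarith [sq_nonneg ‖ContinuousLinearMap.adjoint (d j) z‖, sq_nonneg ‖d (j + 1) z‖]
  -- composition of two consecutive adjoints vanishes
  have hdd : ∀ j : ℤ, (ContinuousLinearMap.adjoint (d j)).comp
      (ContinuousLinearMap.adjoint (d (j + 1))) = 0 := by
    intro j
    rw [← ContinuousLinearMap.adjoint_comp, hd j]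
    simp
  -- the Laplacian is self-adjoint
  have hsa : ∀ j : ℤ, IsSelfAdjoint (Lap H d j) := by
    intro j
    rw [ContinuousLinearMap.isSelfAdjoint_iff']
    simp [Lap, map_add, ContinuousLinearMap.adjoint_comp, ContinuousLinearMap.adjoint_adjoint]
  -- d applied to range of d vanishes; d applied to kernel of Laplacian vanishes
  have key : ∀ j : ℤ, ∀ a : H (j + 1), ∃ c : H (j + 1 + 1),
      d (j + 1) (ContinuousLinearMap.adjoint (d (j + 1)) c) = d (j + 1) a := by
    intro j a
    obtain ⟨x, hx, y, hy, z, hz, hu⟩ := (hodge j).2.2.2 a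
    obtain ⟨c, hc⟩ := hy
    refine ⟨c, ?_⟩
    have hdx : d (j + 1) x = 0 := by
      obtain ⟨x', rfl⟩ := hx
      have := congrArg (fun f : H j →L[ℂ] H (j + 1 + 1) => f x') (hd j)
      simpa using this
    have hdz : d (j + 1) z = 0 := (kerlem j z hz).2
    rw [hu, ← hc]
    simp [map_add, hdx, hdz]
  intro i
  obtain ⟨j, rfl⟩ : ∃ k : ℤ, k + 1 = i := ⟨i - 1, Int.sub_add_cancel i 1⟩
  set n : ℤ := j + 1 with hn
  -- surjectivity of the Laplacian onto the range of `d n`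
  have surj1 : ∀ a : H n, ∃ v : H (n + 1), Lap H d n v = d n a := by
    intro a
    obtain ⟨c, hc⟩ := key j a
    obtain ⟨p, hp, q, hq, r, hr, hcdec⟩ := (hodge n).2.2.2 c
    have hq0 : ContinuousLinearMap.adjoint (d n) q = 0 := by
      obtain ⟨w, rfl⟩ := hq
      have := congrArg (fun f : H (n + 1 + 1) →L[ℂ] H n => f w) (hdd n)
      simpa using this
    have hr0 : ContinuousLinearMap.adjoint (d n) r = 0 := (kerlem n r hr).1
    obtain ⟨p', rfl⟩ := hp
    have hdp : d (n + 1) (d n p') = 0 := by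
      have := congrArg (fun f : H n →L[ℂ] H (n + 1 + 1) => f p') (hd n)
      simpa using this
    refine ⟨d n p', ?_⟩
    have hadj : ContinuousLinearMap.adjoint (d n) c = ContinuousLinearMap.adjoint (d n) (d n p') := by
      rw [hcdec]; simp [map_add, hq0, hr0]
    calc Lap H d n (d n p')
        = d n (ContinuousLinearMap.adjoint (d n) (d n p'))
          + ContinuousLinearMap.adjoint (d (n + 1)) (d (n + 1) (d n p')) := rfl
      _ = d n (ContinuousLinearMap.adjoint (d n) c) := by rw [hdp, ← hadj]; simp
      _ = d n a := hc
  -- surjectivity of the Laplacian onto the range of `(d (n+1))†`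
  have surj2 : ∀ b : H (n + 1 + 1), ∃ v : H (n + 1),
      Lap H d n v = ContinuousLinearMap.adjoint (d (n + 1)) b := by
    intro b
    obtain ⟨p, hp, q, hq, r, hr, hbdec⟩ := (hodge (n + 1)).2.2.2 b
    have hq0 : ContinuousLinearMap.adjoint (d (n + 1)) q = 0 := by
      obtain ⟨w, rfl⟩ := hq
      have := congrArg (fun f : H (n + 1 + 1 + 1) →L[ℂ] H (n + 1) => f w) (hdd (n + 1))
      simpa using this
    have hr0 : ContinuousLinearMap.adjoint (d (n + 1)) r = 0 := (kerlem (n + 1) r hr).1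
    obtain ⟨c, rfl⟩ := hp
    -- decompose c : H (n+1)
    obtain ⟨x, hx, y, hy, z, hz, hcdec⟩ := (hodge n).2.2.2 c
    have hdx : d (n + 1) x = 0 := by
      obtain ⟨x', rfl⟩ := hx
      have := congrArg (fun f : H n →L[ℂ] H (n + 1 + 1) => f x') (hd n)
      simpa using this
    have hdz : d (n + 1) z = 0 := (kerlem n z hz).2
    have hy0 : ContinuousLinearMap.adjoint (d n) y = 0 := by
      obtain ⟨w, rfl⟩ := hy
      have := congrArg (fun f : H (n + 1 + 1) →L[ℂ] H n => f w) (hdd n)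
      simpa using this
    refine ⟨y, ?_⟩
    have hdc : d (n + 1) c = d (n + 1) y := by rw [hcdec]; simp [map_add, hdx, hdz]
    calc Lap H d n y
        = d n (ContinuousLinearMap.adjoint (d n) y)
          + ContinuousLinearMap.adjoint (d (n + 1)) (d (n + 1) y) := rfl
      _ = ContinuousLinearMap.adjoint (d (n + 1)) (d (n + 1) c) := by rw [hy0, ← hdc]; simp
      _ = ContinuousLinearMap.adjoint (d (n + 1)) b := by
          rw [hbdec]; simp [map_add, hq0, hr0]
  -- the kernel of the Laplacian
  set K : Submodule ℂ (H (n + 1)) := LinearMap.ker (Lap H d n : H (n + 1) →ₗ[ℂ] H (n + 1)) with hK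
  haveI : CompleteSpace K := (ContinuousLinearMap.isClosed_ker (Lap H d n)).completeSpace_coe
  haveI : CompleteSpace Kᗮ := K.isClosed_orthogonal.completeSpace_coe
  -- the range of the Laplacian is the orthogonal complement of its kernel
  have hrange_eq : Set.range (Lap H d n) = (Kᗮ : Set (H (n + 1))) := by
    apply Set.Subset.antisymm
    · rintro _ ⟨v, rfl⟩
      rw [SetLike.mem_coe, Submodule.mem_orthogonal]
      intro w hw
      have hw0 : Lap H d n w = 0 := hw
      calc ⟪w, Lap H d n v⟫ = ⟪Lap H d n w, v⟫ := by
            conv_lhs => rw [← (hsa n).adjoint_eq]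
            rw [ContinuousLinearMap.adjoint_inner_right]
      _ = 0 := by rw [hw0]; simp
    · intro u hu
      rw [SetLike.mem_coe, Submodule.mem_orthogonal] at hu
      obtain ⟨x, hx, y, hy, z, hz, hudec⟩ := (hodge n).2.2.2 u
      have hz0 : z = 0 := by
        have h1 : ⟪z, u⟫ = 0 := hu z hz
        have h2 : ⟪z, x⟫ = 0 := by
          rw [← inner_conj_symm, (hodge n).2.1 x hx z hz, map_zero]
        have h3 : ⟪z, y⟫ = 0 := by
          rw [← inner_conj_symm, (hodge n).2.2.1 y hy z hz, map_zero]
        have h4 : ⟪z, z⟫ = (0 : ℂ) := by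
          have := h1
          rw [hudec, inner_add_right, inner_add_right, h2, h3] at this
          simpa using this
        rwa [inner_self_eq_zero] at h4
      obtain ⟨a, rfl⟩ := hx
      obtain ⟨b, rfl⟩ := hy
      obtain ⟨v1, hv1⟩ := surj1 a
      obtain ⟨v2, hv2⟩ := surj2 b
      refine ⟨v1 + v2, ?_⟩
      rw [map_add, hv1, hv2, hudec, hz0, add_zero]; rfl
  have hclosed : IsClosed (Set.range (Lap H d n)) := by
    rw [hrange_eq]; exact K.isClosed_orthogonal
  refine ⟨hclosed, ?_⟩
  -- the Laplacian restricted to Kᗮ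
  have hmem : ∀ x : Kᗮ, Lap H d n (x : H (n + 1)) ∈ Kᗮ := by
    intro x
    have : Lap H d n (x : H (n + 1)) ∈ Set.range (Lap H d n) := ⟨x, rfl⟩
    rwa [hrange_eq] at this
  set T : Kᗮ →L[ℂ] Kᗮ :=
    ContinuousLinearMap.codRestrict ((Lap H d n).comp Kᗮ.subtypeL) Kᗮ hmem with hT
  have hTapp : ∀ x : Kᗮ, (T x : H (n + 1)) = Lap H d n (x : H (n + 1)) := fun x => rfl
  have hTinj : T.ker = ⊥ := by
    rw [Submodule.eq_bot_iff]
    intro x hx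
    have hx0 : T x = 0 := hx
    have h1 : Lap H d n (x : H (n + 1)) = 0 := by
      have := congrArg (Subtype.val) hx0
      simpa [hTapp] using this
    have hxK : (x : H (n + 1)) ∈ K := h1
    have := (Submodule.mem_orthogonal K (x : H (n + 1))).mp x.2 _ hxK
    rw [inner_self_eq_zero] at this
    exact Subtype.ext this
  have hTsurj : T.range = ⊤ := by
    rw [Submodule.eq_top_iff']
    intro y
    have hyr : (y : H (n + 1)) ∈ Set.range (Lap H d n) := by
      rw [hrange_eq]; exact y.2
    obtain ⟨v, hv⟩ := hyr
    set w : H (n + 1) := v - (K.orthogonalProjectionOnto v : H (n + 1)) with hw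
    have hwmem : w ∈ Kᗮ := Submodule.sub_starProjection_mem_orthogonal (K := K) v
    have hPv : Lap H d n ((K.orthogonalProjectionOnto v : H (n + 1))) = 0 :=
      (K.orthogonalProjectionOnto v).2
    refine ⟨⟨w, hwmem⟩, ?_⟩
    apply Subtype.ext
    rw [show (T : Kᗮ →ₗ[ℂ] Kᗮ) ⟨w, hwmem⟩ = T ⟨w, hwmem⟩ from rfl, hTapp]
    show Lap H d n w = (y : H (n + 1))
    rw [hw, map_sub, hPv, sub_zero, hv]
  set E : Kᗮ ≃L[ℂ] Kᗮ := ContinuousLinearEquiv.ofBijective T hTinj hTsurj with hE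
  have hEapp : ∀ x : Kᗮ, E x = T x := fun x => rfl
  set P : H (n + 1) →L[ℂ] H (n + 1) := K.subtypeL.comp (K.orthogonalProjectionOnto) with hP
  set G : H (n + 1) →L[ℂ] H (n + 1) :=
    Kᗮ.subtypeL.comp ((E.symm : Kᗮ →L[ℂ] Kᗮ).comp (Kᗮ.orthogonalProjectionOnto)) with hG
  have hPapp : ∀ u : H (n + 1), P u = (K.orthogonalProjectionOnto u : H (n + 1)) := fun u => rfl
  have hGapp : ∀ u : H (n + 1),
      G u = (E.symm (Kᗮ.orthogonalProjectionOnto u) : H (n + 1)) := fun u => rfl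
  refine ⟨G, P, isSelfAdjoint_starProjection K, ?_, ?_, ?_⟩
  · -- G ∘ Lap + P = 1
    ext u
    show G (Lap H d n u) + P u = u
    have h1 : Lap H d n u ∈ Kᗮ := by
      have : Lap H d n u ∈ Set.range (Lap H d n) := ⟨u, rfl⟩
      rwa [hrange_eq] at this
    have hwmem : u - P u ∈ Kᗮ := Submodule.sub_starProjection_mem_orthogonal (K := K) u
    have hPuK : Lap H d n (P u) = 0 := (K.orthogonalProjectionOnto u).2
    have h2 : (⟨Lap H d n u, h1⟩ : Kᗮ) = E ⟨u - P u, hwmem⟩ := by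
      apply Subtype.ext
      rw [hEapp, hTapp]
      show Lap H d n u = Lap H d n (u - P u)
      rw [map_sub, hPuK, sub_zero]
    have h3 : Kᗮ.orthogonalProjectionOnto (Lap H d n u) = ⟨Lap H d n u, h1⟩ := by
      exact Submodule.orthogonalProjectionOnto_mem_subspace_eq_self (⟨Lap H d n u, h1⟩ : Kᗮ)
    rw [hGapp, h3, h2, ContinuousLinearEquiv.symm_apply_apply]
    show (u - P u) + P u = u
    abel
  · -- Lap ∘ G + P = 1
    ext u
    show Lap H d n (G u) + P u = u
    have h1 : Lap H d n (G u) = (Kᗮ.orthogonalProjectionOnto u : H (n + 1)) := by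
      rw [hGapp]
      have := congrArg (Subtype.val) (E.apply_symm_apply (Kᗮ.orthogonalProjectionOnto u))
      rw [hEapp, hTapp] at this
      exact this
    rw [h1, hPapp]
    exact (add_comm _ _).trans (Submodule.starProjection_add_starProjection_orthogonal (K := K) u)
  · -- Lap ∘ P = 0
    ext u
    show Lap H d n (P u) = 0
    exact (K.orthogonalProjectionOnto u).2
end

section
/- Let H be a complex Hilbert space and F : H → H a bounded self-adjoint linear operator. Suppose there exist a bounded linear operator G : H → H and a bounded self-adjoint linear operator P : H → H such that G F + P = 1, F G + P = 1 and F P = 0. Then the range of F is closed and H is the internal orthogonal direct sum of ker(F) and range(F). -/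
open scoped ComplexInnerProductSpace

/-! Since `P` and `F` are self-adjoint, `F P = 0` gives `P F = 0`, and then `F G + P = 1` shows that
`range F = ker P`, which is closed. The same identity splits `u = P u + F (G u)` with `P u ∈ ker F`,
and `ker F ⟂ range F` because `F` is symmetric. -/

theorem IsSelfAdjoint.mul_eq_zero_of_mul_eq_zero {R : Type*} [NonUnitalNonAssocSemiring R]
    [StarRing R] {a b : R} (ha : IsSelfAdjoint a) (hb : IsSelfAdjoint b) (h : a * b = 0) :
    b * a = 0 := by
  simpa only [star_mul, ha.star_eq, hb.star_eq, star_zero] using congrArg star h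

namespace ContinuousLinearMap

variable {R M : Type*} [Semiring R] [TopologicalSpace M] [AddCommMonoid M] [ContinuousAdd M]
  [Module R M] {F G P : M →L[R] M}

theorem apply_add_apply_of_mul_add_eq_one (h : F * G + P = 1) (u : M) : F (G u) + P u = u := by
  simpa using congrArg (· u) h

theorem range_eq_ker_of_mul_add_eq_one (h : F * G + P = 1) (hPF : P * F = 0) :
    LinearMap.range (F : M →ₗ[R] M) = LinearMap.ker (P : M →ₗ[R] M) := by
  ext u
  constructor
  · rintro ⟨z, rfl⟩
    simpa using congrArg (· z) hPF
  · intro hu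
    refine ⟨G u, ?_⟩
    have hPu : P u = 0 := hu
    simpa [hPu] using apply_add_apply_of_mul_add_eq_one h u

theorem isClosed_range_of_mul_add_eq_one [T1Space M] (h : F * G + P = 1) (hPF : P * F = 0) :
    IsClosed (Set.range F) := by
  have : Set.range F = LinearMap.ker (P : M →ₗ[R] M) := by
    rw [← range_eq_ker_of_mul_add_eq_one h hPF, LinearMap.coe_range, coe_coe]
  exact this ▸ P.isClosed_ker

theorem exists_mem_ker_add_mem_range_of_mul_add_eq_one (h : F * G + P = 1) (hFP : F * P = 0)
    (u : M) : ∃ x ∈ LinearMap.ker (F : M →ₗ[R] M), ∃ y ∈ LinearMap.range (F : M →ₗ[R] M),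
      u = x + y := by
  refine ⟨P u, ?_, F (G u), ⟨G u, rfl⟩, ?_⟩
  · simpa using congrArg (· u) hFP
  · rw [add_comm, apply_add_apply_of_mul_add_eq_one h]

end ContinuousLinearMap

theorem LinearMap.IsSymmetric.inner_eq_zero_of_mem_ker_of_mem_range {𝕜 E : Type*} [RCLike 𝕜]
    [NormedAddCommGroup E] [InnerProductSpace 𝕜 E] {T : E →ₗ[𝕜] E} (hT : T.IsSymmetric)
    {x y : E} (hx : x ∈ LinearMap.ker T) (hy : y ∈ LinearMap.range T) : inner 𝕜 x y = 0 :=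
  Submodule.inner_left_of_mem_orthogonal hy (hT.orthogonal_range ▸ hx)

theorem stmt7_general (H : Type*) [NormedAddCommGroup H] [InnerProductSpace ℂ H]
    [CompleteSpace H]
    (F : H →L[ℂ] H) (hF : IsSelfAdjoint F)
    (G P : H →L[ℂ] H) (hP : IsSelfAdjoint P)
    (h2 : F * G + P = 1) (h3 : F * P = 0) :
    IsClosed (Set.range F) ∧
      (∀ x ∈ LinearMap.ker (F : H →ₗ[ℂ] H), ∀ y ∈ LinearMap.range (F : H →ₗ[ℂ] H), ⟪x, y⟫ = 0) ∧
      (∀ u : H, ∃ x ∈ LinearMap.ker (F : H →ₗ[ℂ] H), ∃ y ∈ LinearMap.range (F : H →ₗ[ℂ] H), u = x + y) := by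
  have hPF : P * F = 0 := hF.mul_eq_zero_of_mul_eq_zero hP h3
  exact ⟨ContinuousLinearMap.isClosed_range_of_mul_add_eq_one h2 hPF,
    fun _ hx _ hy ↦ hF.isSymmetric.inner_eq_zero_of_mem_ker_of_mem_range hx hy,
    ContinuousLinearMap.exists_mem_ker_add_mem_range_of_mul_add_eq_one h2 h3⟩

/-- If a bounded self-adjoint operator `F` on a complex Hilbert space possesses a
self-adjoint parametrix (`G F + P = 1`, `F G + P = 1`, `F P = 0` with `P` self-adjoint),
then `F` has closed range and `H` is the internal orthogonal direct sum of `ker F` and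
`range F`. -/
theorem stmt7 (H : Type*) [NormedAddCommGroup H] [InnerProductSpace ℂ H]
    [CompleteSpace H]
    (F : H →L[ℂ] H) (hF : IsSelfAdjoint F)
    (G P : H →L[ℂ] H) (hP : IsSelfAdjoint P)
    (h1 : G * F + P = 1) (h2 : F * G + P = 1) (h3 : F * P = 0) :
    IsClosed (Set.range F) ∧
      (∀ x ∈ LinearMap.ker (F : H →ₗ[ℂ] H), ∀ y ∈ LinearMap.range (F : H →ₗ[ℂ] H), ⟪x, y⟫ = 0) ∧
      (∀ u : H, ∃ x ∈ LinearMap.ker (F : H →ₗ[ℂ] H), ∃ y ∈ LinearMap.range (F : H →ₗ[ℂ] H), u = x + y) :=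
  stmt7_general H F hF G P hP h2 h3
end

section
/- Let (H_i, d_i)_{i∈ℤ} be a cochain complex of complex Hilbert spaces such that for every i ∈ ℤ the range of d_i is a closed subspace of H_{i+1}. Then for every i ∈ ℤ the range of the Laplace operator Δ_i is a closed subspace of H_i. -/
open scoped ComplexInnerProductSpace

/-!
Write `A = d i`, `B = d (i + 1)` and `Δ = X + Y` with `X = A A†`, `Y = B† B`. Since `B A = 0`,
`X Y = 0 = Y X`, so `range Δ = range X ⊔ range Y` as soon as `X` and `Y` have the same ranges
as their squares. The closed range theorem (`range T` closed ⇒ `range T†` closed) gives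
`range (T T†) = range T` and `range (T† T) = (ker T)ᗮ`; hence `range X = range A` and
`range Y = (ker B)ᗮ` (which also settles the squares, `X` and `Y` being self-adjoint), and `Δ`
has as range the sum of two closed mutually orthogonal subspaces, which is closed.
-/

open ContinuousLinearMap
open scoped NNReal InnerProduct

theorem LinearMap.range_add_eq_sup_of_comp_eq_zero {R M : Type*} [Ring R] [AddCommGroup M]
    [Module R M] {f g : M →ₗ[R] M} (hfg : f ∘ₗ g = 0) (hgf : g ∘ₗ f = 0)
    (hf : (f ∘ₗ f).range = f.range) (hg : (g ∘ₗ g).range = g.range) :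
    (f + g).range = f.range ⊔ g.range := by
  refine le_antisymm (range_add_le _ _) (sup_le ?_ ?_)
  · rw [← hf, show f ∘ₗ f = (f + g) ∘ₗ f by rw [add_comp, hgf, add_zero]]
    exact range_comp_le_range _ _
  · rw [← hg, show g ∘ₗ g = (f + g) ∘ₗ g by rw [add_comp, hfg, zero_add]]
    exact range_comp_le_range _ _

theorem Submodule.IsOrtho.isClosed_sup {𝕜 E : Type*} [RCLike 𝕜] [NormedAddCommGroup E]
    [InnerProductSpace 𝕜 E] [CompleteSpace E] {U V : Submodule 𝕜 E} (hUV : U ⟂ V)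
    (hU : IsClosed (U : Set E)) (hV : IsClosed (V : Set E)) :
    IsClosed ((U ⊔ V : Submodule 𝕜 E) : Set E) := by
  have : CompleteSpace U := hU.completeSpace_coe
  have : CompleteSpace V := hV.completeSpace_coe
  have hanti : AntilipschitzWith 1 (U.subtypeL.coprod V.subtypeL) := by
    refine (U.subtypeL.coprod V.subtypeL).antilipschitz_of_bound fun ⟨u, v⟩ ↦ ?_
    have hsq :=
      norm_add_sq_eq_norm_sq_add_norm_sq_of_inner_eq_zero (u : E) v (hUV.inner_eq u.2 v.2)
    simp only [Prod.norm_def, NNReal.coe_one, one_mul, coprod_apply, Submodule.subtypeL_apply,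
      max_le_iff, Submodule.coe_norm]
    constructor <;>
      nlinarith [norm_nonneg (u : E), norm_nonneg (v : E), norm_nonneg ((u : E) + v)]
  rw [← U.range_subtype, ← V.range_subtype, ← Submodule.toLinearMap_subtypeL,
    ← Submodule.toLinearMap_subtypeL, ← range_coprod]
  exact hanti.isClosed_range (U.subtypeL.coprod V.subtypeL).uniformContinuous

namespace ContinuousLinearMap

variable {𝕜 E F G : Type*} [RCLike 𝕜]
  [NormedAddCommGroup E] [InnerProductSpace 𝕜 E] [CompleteSpace E]
  [NormedAddCommGroup F] [InnerProductSpace 𝕜 F] [CompleteSpace F]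
  [NormedAddCommGroup G] [InnerProductSpace 𝕜 G] [CompleteSpace G]

lemma exists_norm_le_mul_norm_adjoint_of_isClosed_range {T : E →L[𝕜] F}
    (hT : IsClosed (Set.range T)) : ∃ C : ℝ≥0, ∀ y ∈ T.range, ‖y‖ ≤ C * ‖(T†) y‖ := by
  have : CompleteSpace T.range := hT.completeSpace_coe
  obtain ⟨C, hC0, hC⟩ := T.rangeRestrict.exists_preimage_norm_le T.surjective_rangeRestrict
  refine ⟨C.toNNReal, fun y hy ↦ ?_⟩
  obtain ⟨x, hx, hxy⟩ := hC ⟨y, hy⟩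
  have hTx : T x = y := congrArg Subtype.val hx
  have key : ‖y‖ * ‖y‖ ≤ C * ‖(T†) y‖ * ‖y‖ :=
    calc ‖y‖ * ‖y‖ = RCLike.re (inner 𝕜 ((T†) y) x) := by
          rw [adjoint_inner_left, hTx, inner_self_eq_norm_mul_norm]
      _ ≤ ‖(T†) y‖ * ‖x‖ := re_inner_le_norm ..
      _ ≤ ‖(T†) y‖ * (C * ‖y‖) := by gcongr; exact hxy
      _ = C * ‖(T†) y‖ * ‖y‖ := by ring
  rcases (norm_nonneg y).eq_or_lt with hy0 | hy0
  · rw [← hy0]; positivity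
  · rw [Real.coe_toNNReal _ hC0.le]
    exact le_of_mul_le_mul_right key hy0

theorem isClosed_range_adjoint {T : E →L[𝕜] F} (hT : IsClosed (Set.range T)) :
    IsClosed (Set.range (T†)) := by
  have : CompleteSpace T.range := hT.completeSpace_coe
  obtain ⟨C, hC⟩ := exists_norm_le_mul_norm_adjoint_of_isClosed_range hT
  have hanti : AntilipschitzWith C (T† ∘L T.range.subtypeL) :=
    (T† ∘L T.range.subtypeL).antilipschitz_of_bound fun y ↦ hC y y.2
  have hrange : (T† ∘L T.range.subtypeL).range = (T†).range := by
    rw [toLinearMap_comp, LinearMap.range_comp, Submodule.toLinearMap_subtypeL,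
      Submodule.range_subtype, Submodule.map_eq_range_iff, ← orthogonal_range]
    exact T.range.isCompl_orthogonal.codisjoint
  rw [show Set.range (T†) = Set.range (T† ∘L T.range.subtypeL) from
    congrArg SetLike.coe hrange.symm]
  exact hanti.isClosed_range (T† ∘L T.range.subtypeL).uniformContinuous

lemma range_adjoint_eq_orthogonal_ker {T : E →L[𝕜] F} (hT : IsClosed (Set.range T)) :
    (T†).range = T.kerᗮ := by
  rw [orthogonal_ker, IsClosed.submodule_topologicalClosure_eq (isClosed_range_adjoint hT)]

lemma range_comp_adjoint {T : E →L[𝕜] F} (hT : IsClosed (Set.range T)) :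
    (T ∘L T†).range = T.range := by
  rw [toLinearMap_comp, LinearMap.range_comp, range_adjoint_eq_orthogonal_ker hT,
    Submodule.map_eq_range_iff]
  exact T.ker.isCompl_orthogonal.codisjoint.symm

lemma range_adjoint_comp_self {T : E →L[𝕜] F} (hT : IsClosed (Set.range T)) :
    (T† ∘L T).range = T.kerᗮ := by
  simpa [adjoint_adjoint, range_adjoint_eq_orthogonal_ker hT] using
    range_comp_adjoint (isClosed_range_adjoint hT)

lemma range_comp_self_of_isSelfAdjoint {T : E →L[𝕜] E} (hT : IsSelfAdjoint T)
    (hTc : IsClosed (Set.range T)) : (T ∘L T).range = T.range := by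
  simpa only [hT.adjoint_eq] using range_comp_adjoint hTc

theorem isClosed_range_laplacian {A : E →L[𝕜] F} {B : F →L[𝕜] G} (hBA : B ∘L A = 0)
    (hA : IsClosed (Set.range A)) (hB : IsClosed (Set.range B)) :
    IsClosed (Set.range (A ∘L A† + B† ∘L B)) := by
  have hX : (A ∘L A†).range = A.range := range_comp_adjoint hA
  have hY : (B† ∘L B).range = B.kerᗮ := range_adjoint_comp_self hB
  have hXc : IsClosed ((A ∘L A†).range : Set F) := by rw [hX]; exact hA
  have hYc : IsClosed ((B† ∘L B).range : Set F) := by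
    rw [hY]; exact Submodule.isClosed_orthogonal _
  have hXY : (A ∘L A†) ∘L (B† ∘L B) = 0 := by
    rw [show (A ∘L A†) ∘L (B† ∘L B) = A ∘L (B ∘L A)† ∘L B by
      simp only [adjoint_comp, comp_assoc], hBA, map_zero, zero_comp, comp_zero]
  have hYX : (B† ∘L B) ∘L (A ∘L A†) = 0 := by
    rw [show (B† ∘L B) ∘L (A ∘L A†) = B† ∘L (B ∘L A) ∘L A† by simp only [comp_assoc],
      hBA, zero_comp, comp_zero]
  have hXsa : IsSelfAdjoint (A ∘L A†) := isSelfAdjoint_iff'.mpr (by simp [adjoint_comp])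
  have hYsa : IsSelfAdjoint (B† ∘L B) := isSelfAdjoint_iff'.mpr (by simp [adjoint_comp])
  have hrange := LinearMap.range_add_eq_sup_of_comp_eq_zero
    (congrArg toLinearMap hXY) (congrArg toLinearMap hYX)
    (range_comp_self_of_isSelfAdjoint hXsa hXc) (range_comp_self_of_isSelfAdjoint hYsa hYc)
  rw [hX, hY] at hrange
  have hortho : A.range ⟂ B.kerᗮ := B.ker.isOrtho_orthogonal_right.mono_left
    (LinearMap.range_le_ker_iff.mpr (congrArg toLinearMap hBA))
  change IsClosed ((A ∘L A† + B† ∘L B : F →ₗ[𝕜] F).range : Set F)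
  rw [hrange]
  exact hortho.isClosed_sup hA (Submodule.isClosed_orthogonal _)

end ContinuousLinearMap

/-- If every differential of a cochain complex of complex Hilbert spaces has closed
range, then every Laplace operator has closed range. -/
theorem stmt8 (H : ℤ → Type*) [∀ i, NormedAddCommGroup (H i)]
    [∀ i, InnerProductSpace ℂ (H i)] [∀ i, CompleteSpace (H i)]
    (d : ∀ i, H i →L[ℂ] H (i + 1))
    (hd : ∀ i, (d (i + 1)).comp (d i) = 0)
    (hclosed : ∀ i : ℤ, IsClosed (Set.range (d i))) :
    ∀ i : ℤ, IsClosed (Set.range (Lap H d i)) := by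
  intro i
  exact isClosed_range_laplacian (hd i) (hclosed i) (hclosed (i + 1))
end

section
/- Let (H_i, d_i)_{i∈ℤ} be a cochain complex of complex Hilbert spaces such that each d_i is Fredholm, i.e., the range of d_i is closed, ker(d_i) is finite-dimensional, and the orthogonal complement of range(d_i) in H_{i+1} is finite-dimensional. Then for every i ∈ ℤ the Laplace operator Δ_i is Fredholm: its range is closed, ker(Δ_i) is finite-dimensional, and the orthogonal complement of range(Δ_i) in H_i is finite-dimensional. -/
open scoped ComplexInnerProductSpace

/-!
Write `A = d i`, `B = d (i + 1)` and `Δ = A A† + B† B`. Since `Δ` is self-adjoint, the orthogonal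
complement of its range is its kernel, and `⟪Δ x, x⟫ = ‖A† x‖² + ‖B x‖²` shows
`ker Δ = ker A† ∩ ker B ⊆ (range A)ᗮ`, which is finite-dimensional.

For the closed range, use that a closed-range operator `T` is bounded below on `(ker T)ᗮ` and
`T†` is then bounded below on `range T`. Because `B A = 0` and `range A` is closed,
`ker B = range A ⊕ ker Δ`, so `x ⊥ ker Δ` splits as `x = p + q` with `p ∈ range A`,
`q ∈ (ker B)ᗮ`; hence `‖x‖² ≤ C (‖A† x‖² + ‖B x‖²) = C re ⟪Δ x, x⟫ ≤ C ‖Δ x‖ ‖x‖`,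
so `Δ` is bounded below on `(ker Δ)ᗮ`.
-/

section

open scoped InnerProduct InnerProductSpace

variable {𝕜 E F G : Type*} [RCLike 𝕜]
  [NormedAddCommGroup E] [InnerProductSpace 𝕜 E] [CompleteSpace E]
  [NormedAddCommGroup F] [InnerProductSpace 𝕜 F]
  [NormedAddCommGroup G] [InnerProductSpace 𝕜 G]

namespace ContinuousLinearMap

theorem range_comp_subtypeL_orthogonal_ker (T : E →L[𝕜] F) :
    Set.range (T ∘L T.kerᗮ.subtypeL) = Set.range T := by
  refine subset_antisymm (fun _ ⟨x, hx⟩ => ⟨x, hx⟩) ?_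
  rintro _ ⟨x, rfl⟩
  obtain ⟨k, hk, y, hy, rfl⟩ := T.ker.exists_add_mem_mem_orthogonal x
  exact ⟨⟨y, hy⟩, by simp [show T k = 0 from hk]⟩

theorem isClosed_range_of_norm_le_mul_norm (T : E →L[𝕜] F) {C : ℝ}
    (hC : ∀ x ∈ T.kerᗮ, ‖x‖ ≤ C * ‖T x‖) : IsClosed (Set.range T) := by
  rw [← range_comp_subtypeL_orthogonal_ker]
  refine AntilipschitzWith.isClosed_range (K := C.toNNReal) ?_
    (ContinuousLinearMap.uniformContinuous _)
  exact antilipschitz_of_bound _ fun x =>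
    (hC x x.2).trans (mul_le_mul_of_nonneg_right C.le_coe_toNNReal (norm_nonneg _))

variable [CompleteSpace F]

theorem exists_norm_le_mul_norm_of_isClosed_range (T : E →L[𝕜] F)
    (hT : IsClosed (Set.range T)) : ∃ C : ℝ, ∀ x ∈ T.kerᗮ, ‖x‖ ≤ C * ‖T x‖ := by
  have hinj : Function.Injective (T ∘L T.kerᗮ.subtypeL) := by
    refine (injective_iff_map_eq_zero _).mpr fun y hy => Subtype.ext ?_
    exact Submodule.disjoint_def.mp T.ker.orthogonal_disjoint y hy y.2
  obtain ⟨K, hK⟩ := (T ∘L T.kerᗮ.subtypeL).antilipschitz_of_injective_of_isClosed_range hinj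
    (by rwa [range_comp_subtypeL_orthogonal_ker])
  exact ⟨K, fun x hx => (T ∘L T.kerᗮ.subtypeL).bound_of_antilipschitz hK ⟨x, hx⟩⟩

theorem norm_le_mul_norm_adjoint_of_mem_range (T : E →L[𝕜] F) {C : ℝ}
    (hC : ∀ x ∈ T.kerᗮ, ‖x‖ ≤ C * ‖T x‖) {y : F} (hy : y ∈ Set.range T) :
    ‖y‖ ≤ C * ‖(T†) y‖ := by
  rw [← range_comp_subtypeL_orthogonal_ker] at hy
  obtain ⟨⟨x, hx⟩, rfl⟩ := hy
  simp only [comp_apply, Submodule.subtypeL_apply]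
  by_cases h0 : T x = 0
  · simp [h0]
  refine le_of_mul_le_mul_right ?_ (norm_pos_iff.mpr h0)
  calc ‖T x‖ * ‖T x‖ = RCLike.re ⟪x, (T†) (T x)⟫_𝕜 := by
        rw [adjoint_inner_right, inner_self_eq_norm_mul_norm]
    _ ≤ ‖x‖ * ‖(T†) (T x)‖ := (RCLike.re_le_norm _).trans (norm_inner_le_norm _ _)
    _ ≤ C * ‖T x‖ * ‖(T†) (T x)‖ := by gcongr; exact hC x hx
    _ = C * ‖(T†) (T x)‖ * ‖T x‖ := by ring

end ContinuousLinearMap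

section HodgeLaplacian

open ContinuousLinearMap

variable [CompleteSpace F] [CompleteSpace G] (A : E →L[𝕜] F) (B : F →L[𝕜] G)

noncomputable def hodgeLaplacian : F →L[𝕜] F := A ∘L A† + B† ∘L B

theorem re_inner_hodgeLaplacian_self (x : F) :
    RCLike.re ⟪hodgeLaplacian A B x, x⟫_𝕜 = ‖(A†) x‖ ^ 2 + ‖B x‖ ^ 2 := by
  rw [hodgeLaplacian, add_apply, comp_apply, comp_apply, inner_add_left,
    ← adjoint_inner_right A ((A†) x) x, adjoint_inner_left B x (B x), map_add,
    inner_self_eq_norm_sq, inner_self_eq_norm_sq]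

theorem isSelfAdjoint_hodgeLaplacian : IsSelfAdjoint (hodgeLaplacian A B) :=
  (A.isPositive_self_comp_adjoint.add B.isPositive_adjoint_comp_self).isSelfAdjoint

theorem ker_hodgeLaplacian : (hodgeLaplacian A B).ker = (A†).ker ⊓ B.ker := by
  ext x
  simp only [Submodule.mem_inf, LinearMap.mem_ker, coe_coe]
  constructor
  · intro hx
    have h := re_inner_hodgeLaplacian_self A B x
    rw [hx, inner_zero_left, map_zero] at h
    simpa using (add_eq_zero_iff_of_nonneg (sq_nonneg _) (sq_nonneg _)).mp h.symm
  · rintro ⟨hA, hB⟩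
    simp [hodgeLaplacian, hA, hB]

theorem orthogonal_range_hodgeLaplacian :
    (hodgeLaplacian A B).rangeᗮ = (hodgeLaplacian A B).ker :=
  (isSelfAdjoint_hodgeLaplacian A B).isStarNormal.orthogonal_range

theorem ker_hodgeLaplacian_le_orthogonal_range : (hodgeLaplacian A B).ker ≤ A.rangeᗮ := by
  rw [ker_hodgeLaplacian, orthogonal_range]
  exact inf_le_left

theorem finiteDimensional_ker_hodgeLaplacian [FiniteDimensional 𝕜 A.rangeᗮ] :
    FiniteDimensional 𝕜 (hodgeLaplacian A B).ker :=
  Submodule.finiteDimensional_of_le (ker_hodgeLaplacian_le_orthogonal_range A B)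

variable {A B}

theorem ker_eq_range_sup_ker_hodgeLaplacian (hBA : B ∘L A = 0) (hA : IsClosed (Set.range A)) :
    B.ker = A.range ⊔ (hodgeLaplacian A B).ker := by
  have : CompleteSpace A.range := hA.completeSpace_coe
  rw [ker_hodgeLaplacian, ← orthogonal_range,
    Submodule.sup_orthogonal_inf_of_hasOrthogonalProjection
      (LinearMap.range_le_ker_iff.mpr congr(($hBA : E →ₗ[𝕜] G)))]

theorem norm_sq_le_of_mem_orthogonal_ker_hodgeLaplacian (hBA : B ∘L A = 0) {C₁ C₂ : ℝ}
    (hC₁ : ∀ x ∈ A.kerᗮ, ‖x‖ ≤ C₁ * ‖A x‖) (hC₂ : ∀ y ∈ B.kerᗮ, ‖y‖ ≤ C₂ * ‖B y‖) {x : F}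
    (hx : x ∈ (hodgeLaplacian A B).kerᗮ) :
    ‖x‖ ^ 2 ≤ (C₁ ^ 2 + C₂ ^ 2) * RCLike.re ⟪hodgeLaplacian A B x, x⟫_𝕜 := by
  have hA := A.isClosed_range_of_norm_le_mul_norm hC₁
  have : CompleteSpace A.range := hA.completeSpace_coe
  obtain ⟨p, hp, q, hq, rfl⟩ := A.range.exists_add_mem_mem_orthogonal x
  have hp' : p ∈ (hodgeLaplacian A B).kerᗮ :=
    Submodule.orthogonal_le (ker_hodgeLaplacian_le_orthogonal_range A B)
      (A.range.le_orthogonal_orthogonal hp)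
  have hq' : q ∈ B.kerᗮ := by
    rw [ker_eq_range_sup_ker_hodgeLaplacian hBA hA, ← Submodule.inf_orthogonal]
    exact ⟨hq, by simpa using (hodgeLaplacian A B).kerᗮ.sub_mem hx hp'⟩
  have hAq : (A†) q = 0 := LinearMap.mem_ker.mp (A.orthogonal_range ▸ hq)
  have hBp : B p = 0 := by
    obtain ⟨y, rfl⟩ := hp
    exact congr($hBA y)
  have hp_le : ‖p‖ ≤ C₁ * ‖(A†) p‖ := A.norm_le_mul_norm_adjoint_of_mem_range hC₁ hp
  have hq_le : ‖q‖ ≤ C₂ * ‖B q‖ := hC₂ q hq'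
  have hpq : ‖p + q‖ ^ 2 = ‖p‖ ^ 2 + ‖q‖ ^ 2 := by
    rw [sq, sq, sq, norm_add_sq_eq_norm_sq_add_norm_sq_of_inner_eq_zero p q
      (Submodule.inner_right_of_mem_orthogonal hp hq)]
  rw [re_inner_hodgeLaplacian_self, map_add, map_add, hAq, hBp, add_zero, zero_add, hpq]
  have hp_sq := pow_le_pow_left₀ (norm_nonneg p) hp_le 2
  have hq_sq := pow_le_pow_left₀ (norm_nonneg q) hq_le 2
  nlinarith [sq_nonneg C₁, sq_nonneg C₂, sq_nonneg ‖(A†) p‖, sq_nonneg ‖B q‖]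

theorem isClosed_range_hodgeLaplacian (hBA : B ∘L A = 0) (hA : IsClosed (Set.range A))
    (hB : IsClosed (Set.range B)) : IsClosed (Set.range (hodgeLaplacian A B)) := by
  obtain ⟨C₁, hC₁⟩ := A.exists_norm_le_mul_norm_of_isClosed_range hA
  obtain ⟨C₂, hC₂⟩ := B.exists_norm_le_mul_norm_of_isClosed_range hB
  refine (hodgeLaplacian A B).isClosed_range_of_norm_le_mul_norm (C := C₁ ^ 2 + C₂ ^ 2)
    fun x hx => ?_
  by_cases h0 : x = 0
  · simp [h0]
  refine le_of_mul_le_mul_right ?_ (norm_pos_iff.mpr h0)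
  calc ‖x‖ * ‖x‖ = ‖x‖ ^ 2 := (sq _).symm
    _ ≤ (C₁ ^ 2 + C₂ ^ 2) * RCLike.re ⟪hodgeLaplacian A B x, x⟫_𝕜 :=
      norm_sq_le_of_mem_orthogonal_ker_hodgeLaplacian hBA hC₁ hC₂ hx
    _ ≤ (C₁ ^ 2 + C₂ ^ 2) * (‖hodgeLaplacian A B x‖ * ‖x‖) := by
      gcongr
      exact (RCLike.re_le_norm _).trans (norm_inner_le_norm _ _)
    _ = _ := by ring

end HodgeLaplacian

end

theorem stmt9_general (H : ℤ → Type*) [∀ i, NormedAddCommGroup (H i)]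
    [∀ i, InnerProductSpace ℂ (H i)] [∀ i, CompleteSpace (H i)]
    (d : ∀ i, H i →L[ℂ] H (i + 1))
    (hd : ∀ i, (d (i + 1)).comp (d i) = 0)
    (hclosed : ∀ i : ℤ, IsClosed (Set.range (d i)))
    (hcoker : ∀ i : ℤ, FiniteDimensional ℂ ((LinearMap.range (d i : H i →ₗ[ℂ] H (i + 1)))ᗮ)) :
    ∀ i : ℤ, IsClosed (Set.range (Lap H d i)) ∧
      FiniteDimensional ℂ (LinearMap.ker (Lap H d i : H (i + 1) →ₗ[ℂ] H (i + 1))) ∧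
      FiniteDimensional ℂ ((LinearMap.range (Lap H d i : H (i + 1) →ₗ[ℂ] H (i + 1)))ᗮ) := by
  intro i
  have := hcoker i
  have hLap : Lap H d i = hodgeLaplacian (d i) (d (i + 1)) := rfl
  rw [hLap, orthogonal_range_hodgeLaplacian]
  exact ⟨isClosed_range_hodgeLaplacian (hd i) (hclosed i) (hclosed (i + 1)),
    finiteDimensional_ker_hodgeLaplacian _ _, finiteDimensional_ker_hodgeLaplacian _ _⟩

/-- If every differential of a cochain complex of complex Hilbert spaces is Fredholm
(closed range, finite-dimensional kernel, finite-dimensional orthogonal complement of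
the range), then every Laplace operator is Fredholm. -/
theorem stmt9 (H : ℤ → Type*) [∀ i, NormedAddCommGroup (H i)]
    [∀ i, InnerProductSpace ℂ (H i)] [∀ i, CompleteSpace (H i)]
    (d : ∀ i, H i →L[ℂ] H (i + 1))
    (hd : ∀ i, (d (i + 1)).comp (d i) = 0)
    (hclosed : ∀ i : ℤ, IsClosed (Set.range (d i)))
    (hker : ∀ i : ℤ, FiniteDimensional ℂ (LinearMap.ker (d i : H i →ₗ[ℂ] H (i + 1))))
    (hcoker : ∀ i : ℤ, FiniteDimensional ℂ ((LinearMap.range (d i : H i →ₗ[ℂ] H (i + 1)))ᗮ)) :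
    ∀ i : ℤ, IsClosed (Set.range (Lap H d i)) ∧
      FiniteDimensional ℂ (LinearMap.ker (Lap H d i : H (i + 1) →ₗ[ℂ] H (i + 1))) ∧
      FiniteDimensional ℂ ((LinearMap.range (Lap H d i : H (i + 1) →ₗ[ℂ] H (i + 1)))ᗮ) :=
  stmt9_general H d hd hclosed hcoker
end

section
/- Let (H_i, d_i)_{i∈ℤ} be a cochain complex of complex Hilbert spaces such that for every i ∈ ℤ the range of the Laplace operator Δ_i is closed. Then for every i ∈ ℤ: (a) ker(d_i) is the internal orthogonal direct sum of ker(Δ_i) and range(d_{i-1}); and (b) ker((d_i)*) is the internal orthogonal direct sum of ker(Δ_{i+1}) and range((d_{i+1})*). -/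
open scoped ComplexInnerProductSpace

open ContinuousLinearMap in
lemma lap_mem_ker_iff (H : ℤ → Type*) [∀ i, NormedAddCommGroup (H i)]
    [∀ i, InnerProductSpace ℂ (H i)] [∀ i, CompleteSpace (H i)]
    (d : ∀ i, H i →L[ℂ] H (i + 1)) (i : ℤ) (x : H (i + 1)) :
    Lap H d i x = 0 ↔ adjoint (d i) x = 0 ∧ d (i + 1) x = 0 := by
  constructor
  · intro h
    have h0 : ⟪x, Lap H d i x⟫ = 0 := by rw [h, inner_zero_right]
    have h1 : ⟪x, Lap H d i x⟫
        = ⟪adjoint (d i) x, adjoint (d i) x⟫ + ⟪d (i + 1) x, d (i + 1) x⟫ := by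
      simp only [Lap, ContinuousLinearMap.add_apply, ContinuousLinearMap.comp_apply,
        inner_add_right]
      rw [← adjoint_inner_left (d i) (adjoint (d i) x) x,
        adjoint_inner_right (d (i + 1)) x (d (i + 1) x)]
    set a := adjoint (d i) x with ha
    set b := d (i + 1) x with hb
    rw [h1] at h0
    rw [inner_self_eq_norm_sq_to_K (𝕜 := ℂ) a, inner_self_eq_norm_sq_to_K (𝕜 := ℂ) b] at h0
    have h2 : (‖a‖ ^ 2 + ‖b‖ ^ 2 : ℝ) = 0 := by
      have : ((‖a‖ ^ 2 + ‖b‖ ^ 2 : ℝ) : ℂ) = 0 := by push_cast; exact h0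
      exact_mod_cast this
    have hA : ‖a‖ ^ 2 = 0 := by nlinarith [sq_nonneg ‖a‖, sq_nonneg ‖b‖]
    have hB : ‖b‖ ^ 2 = 0 := by nlinarith [sq_nonneg ‖a‖, sq_nonneg ‖b‖]
    constructor
    · simpa using (pow_eq_zero_iff (n := 2) (by norm_num)).mp hA
    · simpa using (pow_eq_zero_iff (n := 2) (by norm_num)).mp hB
  · rintro ⟨h1, h2⟩
    simp [Lap, h1, h2]

open ContinuousLinearMap

/-- If every Laplacian of a cochain complex of complex Hilbert spaces has closed range,
then (a) `ker d_i = ker Δ_i ⊕ range d_{i-1}` and (b) `ker (d_i)* = ker Δ_{i+1} ⊕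
range (d_{i+1})*`, both orthogonal internal direct sums. -/
theorem stmt12 (H : ℤ → Type*) [∀ i, NormedAddCommGroup (H i)]
    [∀ i, InnerProductSpace ℂ (H i)] [∀ i, CompleteSpace (H i)]
    (d : ∀ i, H i →L[ℂ] H (i + 1))
    (hd : ∀ i, (d (i + 1)).comp (d i) = 0)
    (hclosed : ∀ i : ℤ, IsClosed (Set.range (Lap H d i))) :
    ∀ i : ℤ,
      ((∀ x ∈ LinearMap.ker (Lap H d i : H (i + 1) →ₗ[ℂ] H (i + 1)), ∀ y ∈ LinearMap.range (d i : H i →ₗ[ℂ] H (i + 1)), ⟪x, y⟫ = 0) ∧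
        LinearMap.ker (d (i + 1) : H (i + 1) →ₗ[ℂ] H (i + 1 + 1)) = LinearMap.ker (Lap H d i : H (i + 1) →ₗ[ℂ] H (i + 1)) ⊔ LinearMap.range (d i : H i →ₗ[ℂ] H (i + 1))) ∧
      ((∀ x ∈ LinearMap.ker (Lap H d i : H (i + 1) →ₗ[ℂ] H (i + 1)),
          ∀ y ∈ LinearMap.range (ContinuousLinearMap.adjoint (d (i + 1)) : H (i + 1 + 1) →ₗ[ℂ] H (i + 1)), ⟪x, y⟫ = 0) ∧
        LinearMap.ker (ContinuousLinearMap.adjoint (d i) : H (i + 1) →ₗ[ℂ] H i)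
          = LinearMap.ker (Lap H d i : H (i + 1) →ₗ[ℂ] H (i + 1))
            ⊔ LinearMap.range (ContinuousLinearMap.adjoint (d (i + 1)) : H (i + 1 + 1) →ₗ[ℂ] H (i + 1))) := by
  intro i
  have hdd : ∀ z, d (i + 1) (d i z) = 0 := fun z => by
    have := congrFun (congrArg DFunLike.coe (hd i)) z; simpa using this
  have hdadj : ∀ w, adjoint (d i) (adjoint (d (i + 1)) w) = 0 := fun w => by
    have h := congrArg ContinuousLinearMap.adjoint (hd i)
    rw [adjoint_comp] at h
    have := congrFun (congrArg DFunLike.coe h) w; simpa using this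
  -- membership in kernel of Lap
  have hk := lap_mem_ker_iff H d i
  -- decomposition: every x = q + Lap y with q ∈ ker Lap
  have hdecomp : ∀ x : H (i + 1), ∃ q y, Lap H d i q = 0 ∧ x = q + Lap H d i y := by
    intro x
    set K : Submodule ℂ (H (i + 1)) := LinearMap.range (Lap H d i : H (i + 1) →ₗ[ℂ] H (i + 1)) with hK
    have hKc : IsClosed (K : Set (H (i + 1))) := by
      simpa [hK, LinearMap.coe_range] using hclosed i
    haveI : CompleteSpace K := hKc.completeSpace_coe
    obtain ⟨y, hy⟩ : (K.orthogonalProjection x : H (i + 1)) ∈ K :=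
      (K.orthogonalProjection x).2
    have hq : x - K.orthogonalProjection x ∈ Kᗮ :=
      K.sub_starProjection_mem_orthogonal x
    refine ⟨x - K.orthogonalProjection x, y, ?_, by rw [← hy, ContinuousLinearMap.coe_coe]; abel⟩
    -- q ∈ Kᗮ implies Lap q = 0 by self-adjointness
    have hsa : IsSelfAdjoint (Lap H d i) := by
      rw [isSelfAdjoint_iff']
      simp only [Lap, adjoint_comp, adjoint_adjoint, map_add]
    set q := x - K.orthogonalProjection x
    have : ∀ z, ⟪z, Lap H d i q⟫ = 0 := by
      intro z
      have := hq (Lap H d i z) ⟨z, rfl⟩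
      rw [← hsa.adjoint_eq, adjoint_inner_right]
      exact this
    have := this (Lap H d i q)
    exact inner_self_eq_zero.mp this
  have horth1 : ∀ x ∈ LinearMap.ker (Lap H d i : H (i + 1) →ₗ[ℂ] H (i + 1)), ∀ y ∈ LinearMap.range (d i : H i →ₗ[ℂ] H (i + 1)), ⟪x, y⟫ = 0 := by
    rintro x hx y ⟨z, rfl⟩
    have := (hk x).mp hx
    rw [ContinuousLinearMap.coe_coe, ← adjoint_inner_left, this.1, inner_zero_left]
  have horth2 : ∀ x ∈ LinearMap.ker (Lap H d i : H (i + 1) →ₗ[ℂ] H (i + 1)),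
      ∀ y ∈ LinearMap.range (adjoint (d (i + 1)) : H (i + 1 + 1) →ₗ[ℂ] H (i + 1)), ⟪x, y⟫ = 0 := by
    rintro x hx y ⟨z, rfl⟩
    have := (hk x).mp hx
    rw [ContinuousLinearMap.coe_coe, adjoint_inner_right, this.2, inner_zero_left]
  refine ⟨⟨horth1, ?_⟩, ⟨horth2, ?_⟩⟩
  · apply le_antisymm
    · intro x hx
      have hx' : d (i + 1) x = 0 := hx
      obtain ⟨q, y, hq, hxy⟩ := hdecomp x
      have hqk : d (i + 1) q = 0 := ((hk q).mp hq).2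
      set u := adjoint (d (i + 1)) (d (i + 1) y) with hu
      have hxu : x = q + d i (adjoint (d i) y) + u := by
        rw [hxy]; simp [Lap, hu]; abel
      have hdu : d (i + 1) u = 0 := by
        have : u = x - q - d i (adjoint (d i) y) := by rw [hxu]; abel
        rw [this]
        simp [map_sub, hx', hqk, hdd]
      have hu0 : u = 0 := by
        have : ⟪u, u⟫ = 0 := by
          rw [hu, adjoint_inner_left, ← hu, hdu, inner_zero_right]
        exact inner_self_eq_zero.mp this
      rw [hxu, hu0, add_zero]
      exact Submodule.add_mem_sup ((hk q).mpr ⟨((hk q).mp hq).1, hqk⟩)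
        ⟨adjoint (d i) y, rfl⟩
    · apply sup_le
      · intro x hx
        exact ((hk x).mp hx).2
      · rintro x ⟨z, rfl⟩
        exact hdd z
  · apply le_antisymm
    · intro x hx
      have hx' : adjoint (d i) x = 0 := hx
      obtain ⟨q, y, hq, hxy⟩ := hdecomp x
      have hqk : adjoint (d i) q = 0 := ((hk q).mp hq).1
      set u := d i (adjoint (d i) y) with hu
      have hxu : x = q + u + adjoint (d (i + 1)) (d (i + 1) y) := by
        rw [hxy]; simp [Lap, hu]; abel
      have hdu : adjoint (d i) u = 0 := by
        have : u = x - q - adjoint (d (i + 1)) (d (i + 1) y) := by rw [hxu]; abel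
        rw [this]
        simp [map_sub, hx', hqk, hdadj]
      have hu0 : u = 0 := by
        have : ⟪u, u⟫ = 0 := by
          rw [hu, ← adjoint_inner_right, ← hu, hdu, inner_zero_right]
        exact inner_self_eq_zero.mp this
      rw [hxu, hu0, add_zero]
      exact Submodule.add_mem_sup ((hk q).mpr ⟨hqk, ((hk q).mp hq).2⟩)
        ⟨d (i + 1) y, rfl⟩
    · apply sup_le
      · intro x hx
        exact ((hk x).mp hx).1
      · rintro x ⟨z, rfl⟩
        exact hdadj z
end

section
/- Let (H_i, d_i)_{i∈ℤ} be a cochain complex of complex Hilbert spaces such that for every i ∈ ℤ the range of the Laplace operator Δ_i is closed. Then for every i ∈ ℤ, range(d_{i-1}) is a closed subspace of ker(d_i), and the i-th cohomology group ker(d_i)/range(d_{i-1}), equipped with the quotient norm, is a Banach space that is isomorphic to ker(Δ_i) via a continuous linear equivalence (induced by the orthogonal projection of ker(d_i) onto the orthogonal complement of range(d_{i-1}) in ker(d_i)). -/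
open ContinuousLinearMap Submodule

set_option maxHeartbeats 1000000 in
/-- If every Laplacian of a cochain complex of complex Hilbert spaces has closed range,
then `range d_{i-1}` is a closed subspace of `ker d_i`, and the `i`-th cohomology group
`ker d_i / range d_{i-1}` with the quotient norm is a Banach space which is continuously
linearly equivalent to `ker Δ_i`. -/
theorem stmt13 (H : ℤ → Type*) [∀ i, NormedAddCommGroup (H i)]
    [∀ i, InnerProductSpace ℂ (H i)] [∀ i, CompleteSpace (H i)]
    (d : ∀ i, H i →L[ℂ] H (i + 1))
    (hd : ∀ i, (d (i + 1)).comp (d i) = 0) 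
    (hclosed : ∀ i : ℤ, IsClosed (Set.range (Lap H d i))) :
    ∀ i : ℤ,
      LinearMap.range (d i : H i →ₗ[ℂ] H (i + 1)) ≤ LinearMap.ker (d (i + 1) : H (i + 1) →ₗ[ℂ] H (i + 1 + 1)) ∧
      IsClosed (((LinearMap.range (d i : H i →ₗ[ℂ] H (i + 1))).comap (LinearMap.ker (d (i + 1) : H (i + 1) →ₗ[ℂ] H (i + 1 + 1))).subtype :
          Submodule ℂ (LinearMap.ker (d (i + 1) : H (i + 1) →ₗ[ℂ] H (i + 1 + 1)))) : Set (LinearMap.ker (d (i + 1) : H (i + 1) →ₗ[ℂ] H (i + 1 + 1)))) ∧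
      CompleteSpace
        ((LinearMap.ker (d (i + 1) : H (i + 1) →ₗ[ℂ] H (i + 1 + 1))) ⧸
          (LinearMap.range (d i : H i →ₗ[ℂ] H (i + 1))).comap (LinearMap.ker (d (i + 1) : H (i + 1) →ₗ[ℂ] H (i + 1 + 1))).subtype) ∧
      Nonempty
        (((LinearMap.ker (d (i + 1) : H (i + 1) →ₗ[ℂ] H (i + 1 + 1))) ⧸
            (LinearMap.range (d i : H i →ₗ[ℂ] H (i + 1))).comap (LinearMap.ker (d (i + 1) : H (i + 1) →ₗ[ℂ] H (i + 1 + 1))).subtype)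
          ≃L[ℂ] LinearMap.ker (Lap H d i : H (i + 1) →ₗ[ℂ] H (i + 1))) := by
  intro i
  set A := d i with hA
  set B := d (i+1) with hB
  set A' := ContinuousLinearMap.adjoint A with hA'
  set B' := ContinuousLinearMap.adjoint B with hB'
  set L : H (i+1) →L[ℂ] H (i+1) := Lap H d i with hL
  have hLdef : L = A.comp A' + B'.comp B := rfl
  have hclosed' : IsClosed (Set.range L) := hclosed i
  have hBA : ∀ x, B (A x) = 0 := fun x => by
    simpa using ContinuousLinearMap.ext_iff.mp (hd i) x
  have hLx : ∀ x, L x = A (A' x) + B' (B x) := fun x => rfl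
  have hLinner : ∀ x y, (inner ℂ (L x) y : ℂ) = inner ℂ (A' x) (A' y) + inner ℂ (B x) (B y) := by
    intro x y
    rw [hLx, inner_add_left, hA', hB', ContinuousLinearMap.adjoint_inner_left B,
      ← ContinuousLinearMap.adjoint_inner_right A]
  have key : ∀ x, (inner ℂ (L x) x : ℂ) = 0 → A' x = 0 ∧ B x = 0 := by
    intro x h0
    rw [hLinner, inner_self_eq_norm_sq_to_K, inner_self_eq_norm_sq_to_K] at h0
    have h0' : (‖A' x‖^2 + ‖B x‖^2 : ℝ) = 0 := by
      have h : ((‖A' x‖^2 + ‖B x‖^2 : ℝ) : ℂ) = 0 := by push_cast; exact h0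
      exact_mod_cast h
    obtain ⟨h1, h2⟩ := (add_eq_zero_iff_of_nonneg (sq_nonneg _) (sq_nonneg _)).mp h0'
    exact ⟨norm_eq_zero.mp (pow_eq_zero_iff two_ne_zero |>.mp h1),
      norm_eq_zero.mp (pow_eq_zero_iff two_ne_zero |>.mp h2)⟩
  have hkerL : ∀ x, L x = 0 ↔ A' x = 0 ∧ B x = 0 := by
    intro x
    constructor
    · intro h
      exact key x (by rw [h]; simp)
    · rintro ⟨h1, h2⟩
      rw [hLx, h1, h2]; simp
  have horth : (LinearMap.range (L : H (i+1) →ₗ[ℂ] H (i+1)))ᗮ = LinearMap.ker (L : H (i+1) →ₗ[ℂ] H (i+1)) := by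
    ext y
    rw [Submodule.mem_orthogonal, LinearMap.mem_ker]
    constructor
    · intro h
      exact (hkerL y).mpr (key y (h (L y) ⟨y, rfl⟩))
    · rintro h u ⟨x, rfl⟩
      obtain ⟨h1, h2⟩ := (hkerL y).mp h
      simp only [ContinuousLinearMap.coe_coe]; rw [hLinner, h1, h2, inner_zero_right, inner_zero_right, add_zero]
  have hrLc : IsClosed ((LinearMap.range (L : H (i+1) →ₗ[ℂ] H (i+1)) : Submodule ℂ (H (i+1))) : Set (H (i+1))) := by
    simpa [LinearMap.coe_range] using hclosed'
  haveI : CompleteSpace (LinearMap.range (L : H (i+1) →ₗ[ℂ] H (i+1))) := hrLc.completeSpace_coe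
  have horth2 : (LinearMap.ker (L : H (i+1) →ₗ[ℂ] H (i+1)))ᗮ = LinearMap.range (L : H (i+1) →ₗ[ℂ] H (i+1)) := by
    rw [← horth, Submodule.orthogonal_orthogonal]
  -- range A = range L ⊓ ker B
  have hRA : LinearMap.range (A : H i →ₗ[ℂ] H (i+1)) = LinearMap.range (L : H (i+1) →ₗ[ℂ] H (i+1)) ⊓ LinearMap.ker (B : H (i+1) →ₗ[ℂ] H (i+1+1)) := by
    apply le_antisymm
    · rintro y ⟨x, rfl⟩
      refine Submodule.mem_inf.mpr ⟨?_, hBA x⟩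
      rw [← horth2]
      rw [Submodule.mem_orthogonal]
      rintro u hu
      obtain ⟨h1, h2⟩ := (hkerL u).mp hu
      simp only [ContinuousLinearMap.coe_coe]; rw [← ContinuousLinearMap.adjoint_inner_left A, ← hA', h1, inner_zero_left]
    · rintro y hy
      obtain ⟨⟨z, rfl⟩, (hy2 : B (L z) = 0)⟩ := Submodule.mem_inf.mp hy
      have hBz : B' (B z) = 0 := by
        have h1 : B (B' (B z)) = 0 := by
          rw [hLx, map_add, hBA] at hy2
          simpa using hy2
        have h2 : (inner ℂ (B' (B z)) (B' (B z)) : ℂ) = 0 := by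
          rw [hB', ContinuousLinearMap.adjoint_inner_left, h1, inner_zero_right]
        exact inner_self_eq_zero.mp h2
      exact ⟨A' z, by simp only [ContinuousLinearMap.coe_coe]; rw [hLx, hBz, add_zero]⟩
  have hkerB_closed : IsClosed ((LinearMap.ker (B : H (i+1) →ₗ[ℂ] H (i+1+1)) : Submodule ℂ (H (i+1))) : Set (H (i+1))) :=
    isClosed_ker B
  have hRAc : IsClosed ((LinearMap.range (A : H i →ₗ[ℂ] H (i+1)) : Submodule ℂ (H (i+1))) : Set (H (i+1))) := by
    rw [hRA]
    rw [Submodule.coe_inf]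
    exact hrLc.inter hkerB_closed
  -- Part 1
  have part1 : LinearMap.range (A : H i →ₗ[ℂ] H (i+1)) ≤ LinearMap.ker (B : H (i+1) →ₗ[ℂ] H (i+1+1)) := by
    rw [hRA]; exact inf_le_right
  -- Part 2
  set N := LinearMap.ker (B : H (i+1) →ₗ[ℂ] H (i+1+1)) with hN
  set R' : Submodule ℂ N := (LinearMap.range (A : H i →ₗ[ℂ] H (i+1))).comap N.subtype with hR'
  have part2 : IsClosed ((R' : Submodule ℂ N) : Set N) := by
    have : ((R' : Submodule ℂ N) : Set N) = N.subtype ⁻¹' (LinearMap.range (A : H i →ₗ[ℂ] H (i+1)) : Set (H (i+1))) := rfl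
    rw [this]
    exact hRAc.preimage (continuous_subtype_val)
  -- completeness
  haveI : CompleteSpace N := hkerB_closed.completeSpace_coe
  haveI : CompleteSpace (N ⧸ R') := Submodule.Quotient.completeSpace R'
  haveI : CompleteSpace (LinearMap.ker (L : H (i+1) →ₗ[ℂ] H (i+1))) := (isClosed_ker L).completeSpace_coe
  haveI : HasOrthogonalProjection (LinearMap.ker (L : H (i+1) →ₗ[ℂ] H (i+1))) := inferInstance
  -- the equivalence
  have hKN : ∀ x : LinearMap.ker (L : H (i+1) →ₗ[ℂ] H (i+1)), (x : H (i+1)) ∈ N := fun x => ((hkerL x).mp x.2).2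
  let incl : (LinearMap.ker (L : H (i+1) →ₗ[ℂ] H (i+1))) →L[ℂ] N :=
    ContinuousLinearMap.codRestrict (Submodule.subtypeL _) N hKN
  let π : N →L[ℂ] N ⧸ R' := ⟨R'.mkQ, continuous_quot_mk⟩
  let g : (LinearMap.ker (L : H (i+1) →ₗ[ℂ] H (i+1))) →L[ℂ] N ⧸ R' := π.comp incl
  have hg : ∀ x : LinearMap.ker (L : H (i+1) →ₗ[ℂ] H (i+1)), g x = Submodule.Quotient.mk (⟨(x : H (i+1)), hKN x⟩ : N) := by
    intro x; rfl
  have hinj : g.ker = ⊥ := by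
    rw [LinearMap.ker_eq_bot']
    intro x hx
    have hx' : (⟨(x : H (i+1)), hKN x⟩ : N) ∈ R' := by
      rwa [ContinuousLinearMap.coe_coe, hg, Submodule.Quotient.mk_eq_zero] at hx
    have hxA : (x : H (i+1)) ∈ LinearMap.range (A : H i →ₗ[ℂ] H (i+1)) := hx'
    have hxO : (x : H (i+1)) ∈ (LinearMap.ker (L : H (i+1) →ₗ[ℂ] H (i+1)))ᗮ := by
      rw [horth2]
      exact (Submodule.mem_inf.mp (hRA ▸ hxA)).1
    have : (inner ℂ (x : H (i+1)) (x : H (i+1)) : ℂ) = 0 :=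
      (Submodule.mem_orthogonal _ _).mp hxO _ x.2
    exact Subtype.ext (inner_self_eq_zero.mp this)
  have hsurj : g.range = ⊤ := by
    rw [LinearMap.range_eq_top]
    intro q
    obtain ⟨n, rfl⟩ := Submodule.mkQ_surjective R' q
    obtain ⟨y, hy, z, hz, hnz⟩ :=
      Submodule.exists_add_mem_mem_orthogonal (K := LinearMap.ker (L : H (i+1) →ₗ[ℂ] H (i+1))) (n : H (i+1))
    have hzB : z ∈ N := by
      have : z = (n : H (i+1)) - y := by rw [hnz]; abel
      rw [this]
      exact Submodule.sub_mem N n.2 ((hkerL y).mp hy).2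
    have hzA : z ∈ LinearMap.range (A : H i →ₗ[ℂ] H (i+1)) := by
      rw [hRA]
      exact Submodule.mem_inf.mpr ⟨horth2 ▸ hz, hzB⟩
    refine ⟨⟨y, hy⟩, ?_⟩
    rw [ContinuousLinearMap.coe_coe, hg, Submodule.mkQ_apply, Submodule.Quotient.eq]
    refine Submodule.mem_comap.mpr ?_
    show y - (n : H (i+1)) ∈ LinearMap.range (A : H i →ₗ[ℂ] H (i+1))
    have hyz : y - (n : H (i+1)) = -z := by rw [hnz]; abel
    rw [hyz]
    exact Submodule.neg_mem _ hzA
  exact ⟨part1, part2, inferInstance,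
    ⟨(ContinuousLinearEquiv.ofBijective g hinj hsurj).symm⟩⟩
end

section
/- Let V and W be complex Hilbert spaces, let U be a (not necessarily closed) linear subspace of W, regarded as an inner product space with the inner product inherited from W, and let j : U → V be an injective linear map such that there is a constant C > 0 with ‖u‖_W ≤ C·‖j u‖_V for all u ∈ U. Let D : U → U be a linear map that is continuous with respect to ‖·‖_W and symmetric with respect to the inner product of W (⟨D u, v⟩_W = ⟨u, D v⟩_W for all u, v ∈ U), and let D̃ : V → W be a bounded linear map extending D, i.e., D̃(j u) = D u for all u ∈ U. Assume: (i) the range of D̃ is closed; (ii) whenever v ∈ V satisfies D̃ v ∈ U, then v ∈ j(U), and whenever w ∈ W satisfies D̃* w ∈ j(U), then w ∈ U; (iii) ker(D̃) ⊆ j(U) and ker(D̃*) ⊆ U. Then U is the internal direct sum of ker(D) and range(D), these two subspaces are orthogonal with respect to the inner product of W, and there exist a ‖·‖_W-continuous linear map G : U → U and the projection P : U → U onto ker(D) along range(D) such that P is symmetric with respect to the inner product of W, G D + P = 1_U, D G + P = 1_U and D P = 0. -/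
open scoped ComplexInnerProductSpace

set_option maxHeartbeats 1000000

/-- Transfer theorem (Hilbert-space instance of the paper's Theorem 6): let `U` be a
(not necessarily closed) subspace of a Hilbert space `W`, embedded in a Hilbert space
`V` by an injective map `j` whose inverse is bounded, let `D : U → U` be a symmetric
`‖·‖_W`-continuous map and `D̃ : V → W` a bounded extension of `D` with closed range
satisfying the regularity conditions (ii) and (iii). Then `U = ker D ⊕ range D`
orthogonally and `D` is self-adjoint parametrix possessing. -/
theorem stmt17 (V W : Type*)
    [NormedAddCommGroup V] [InnerProductSpace ℂ V] [CompleteSpace V]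
    [NormedAddCommGroup W] [InnerProductSpace ℂ W] [CompleteSpace W]
    (U : Submodule ℂ W)
    (j : U →ₗ[ℂ] V) (hj : Function.Injective j)
    (C : ℝ) (hC : 0 < C) (hjnorm : ∀ u : U, ‖u‖ ≤ C * ‖j u‖)
    (D : U →ₗ[ℂ] U) (hDcont : Continuous D)
    (hDsym : ∀ u v : U, ⟪D u, v⟫ = ⟪u, D v⟫)
    (Dt : V →L[ℂ] W) (hDt : ∀ u : U, Dt (j u) = (D u : W))
    (hrange : IsClosed (Set.range Dt))
    (hreg : ∀ v : V, Dt v ∈ U → v ∈ LinearMap.range j)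
    (hreg' : ∀ w : W, ContinuousLinearMap.adjoint Dt w ∈ LinearMap.range j → w ∈ U)
    (hker : ∀ v : V, v ∈ LinearMap.ker (Dt : V →ₗ[ℂ] W) → v ∈ LinearMap.range j)
    (hker' : ∀ w : W, w ∈ LinearMap.ker (ContinuousLinearMap.adjoint Dt : W →ₗ[ℂ] V) → w ∈ U) :
    (∀ x ∈ LinearMap.ker D, ∀ y ∈ LinearMap.range D, ⟪x, y⟫ = 0) ∧
    LinearMap.ker D ⊔ LinearMap.range D = ⊤ ∧
    LinearMap.ker D ⊓ LinearMap.range D = ⊥ ∧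
    ∃ G P : U →ₗ[ℂ] U, Continuous G ∧
      (∀ x ∈ LinearMap.ker D, P x = x) ∧
      (∀ y ∈ LinearMap.range D, P y = 0) ∧
      (∀ u v : U, ⟪P u, v⟫ = ⟪u, P v⟫) ∧
      G ∘ₗ D + P = LinearMap.id ∧
      D ∘ₗ G + P = LinearMap.id ∧
      D ∘ₗ P = 0 := by
  classical
  -- orthogonality of ker D and range D
  have horth : ∀ x ∈ LinearMap.ker D, ∀ y ∈ LinearMap.range D, ⟪x, y⟫ = (0 : ℂ) := by
    intro x hx y hy
    obtain ⟨u, rfl⟩ := hy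
    have hx0 : D x = 0 := hx
    have : ⟪D u, x⟫ = (0 : ℂ) := by rw [hDsym, hx0, inner_zero_right]
    calc ⟪x, D u⟫ = starRingEnd ℂ ⟪D u, x⟫ := (inner_conj_symm _ _).symm
    _ = 0 := by rw [this]; simp
  -- the closed range submodule K
  set K : Submodule ℂ W := LinearMap.range (Dt : V →ₗ[ℂ] W) with hKdef
  have hKc : IsClosed (K : Set W) := by
    have : (K : Set W) = Set.range Dt := by
      ext w; simp [hKdef, LinearMap.mem_range]
    rw [this]; exact hrange
  haveI : CompleteSpace K := hKc.completeSpace_coe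
  set Q : W →L[ℂ] W := K.subtypeL.comp (Submodule.orthogonalProjection K) with hQdef
  have hQmem : ∀ w : W, Q w ∈ K := fun w => (Submodule.orthogonalProjection K w).2
  have hQorth : ∀ w : W, w - Q w ∈ Kᗮ := fun w =>
    Submodule.sub_starProjection_mem_orthogonal (K := K) w
  have hQK : ∀ w ∈ K, Q w = w := by
    intro w hw
    have := Submodule.orthogonalProjection_mem_subspace_eq_self (K := K) ⟨w, hw⟩
    simpa [hQdef] using congrArg (Subtype.val) this
  -- elements of Kᗮ lie in U
  have hUorth : ∀ w : W, w ∈ Kᗮ → w ∈ U := by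
    intro w hw
    apply hker'
    have h0 : ContinuousLinearMap.adjoint Dt w = 0 := by
      have : ⟪ContinuousLinearMap.adjoint Dt w, ContinuousLinearMap.adjoint Dt w⟫ = (0 : ℂ) := by
        rw [ContinuousLinearMap.adjoint_inner_left]
        exact ((Submodule.mem_orthogonal' K w).1 hw) _ ⟨_, rfl⟩
      exact inner_self_eq_zero.mp this
    simp [LinearMap.mem_ker, h0]
  have hPmem : ∀ u : U, (u : W) - Q u ∈ U := fun u => hUorth _ (hQorth u)
  have hQU : ∀ u : U, Q (u : W) ∈ U := by
    intro u
    have : Q (u : W) = (u : W) - ((u : W) - Q u) := by abel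
    rw [this]
    exact U.sub_mem u.2 (hPmem u)
  -- the projection P onto ker D
  set PU : U →ₗ[ℂ] U :=
    { toFun := fun u => ⟨(u : W) - Q u, hPmem u⟩
      map_add' := by
        intro a b; apply Subtype.ext
        push_cast
        simp only [map_add]
        abel
      map_smul' := by
        intro c a; apply Subtype.ext
        push_cast
        simp only [map_smul, RingHom.id_apply, smul_sub, id] } with hPUdef
  have hPUapply : ∀ u : U, ((PU u : U) : W) = (u : W) - Q u := fun u => rfl
  have hPUcont : Continuous PU := by
    apply Continuous.subtype_mk
    exact continuous_subtype_val.sub (Q.continuous.comp continuous_subtype_val)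
  -- range of D sits in K
  have hrangeD : ∀ u : U, (D u : W) ∈ K := fun u => ⟨j u, hDt u⟩
  -- P kills into ker D
  have hPker : ∀ u : U, D (PU u) = 0 := by
    intro u
    have h1 : ((PU u : U) : W) ∈ Kᗮ := by rw [hPUapply]; exact hQorth u
    have : ⟪D (PU u), D (PU u)⟫ = (0 : ℂ) := by
      rw [hDsym, Submodule.coe_inner]
      exact ((Submodule.mem_orthogonal' _ _).1 h1) _ (hrangeD _)
    exact inner_self_eq_zero.mp this
  -- (PU u : W) in K orthogonal, and Q of elements of range D
  have hPrange : ∀ u : U, PU (D u) = 0 := by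
    intro u
    apply Subtype.ext
    rw [hPUapply, hQK _ (hrangeD u)]
    simp
  -- setup for inverting Dt on (ker Dt)ᗮ
  set M : Submodule ℂ V := LinearMap.ker (Dt : V →ₗ[ℂ] W) with hMdef
  have hMc : IsClosed (M : Set V) := ContinuousLinearMap.isClosed_ker Dt
  haveI : CompleteSpace M := hMc.completeSpace_coe
  haveI : CompleteSpace Mᗮ := (Submodule.isClosed_orthogonal M).completeSpace_coe
  set S : Mᗮ →L[ℂ] K :=
    ContinuousLinearMap.codRestrict (Dt.comp Mᗮ.subtypeL) K (fun x => ⟨x, rfl⟩) with hSdef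
  have hSinj : LinearMap.ker (S : Mᗮ →ₗ[ℂ] K) = ⊥ := by
    rw [LinearMap.ker_eq_bot']
    intro n hn
    have hn' : Dt (n : V) = 0 := by
      have := congrArg Subtype.val hn
      exact this
    have : (n : V) ∈ M ⊓ Mᗮ := ⟨hn', n.2⟩
    rw [Submodule.inf_orthogonal_eq_bot] at this
    exact Subtype.ext this
  have hSsurj : LinearMap.range (S : Mᗮ →ₗ[ℂ] K) = ⊤ := by
    rw [LinearMap.range_eq_top]
    rintro ⟨k, v, rfl⟩
    refine ⟨⟨v - Submodule.orthogonalProjection M v, Submodule.sub_starProjection_mem_orthogonal (K := M) v⟩, ?_⟩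
    apply Subtype.ext
    have hm : Dt ((Submodule.orthogonalProjection M v : V)) = 0 := (Submodule.orthogonalProjection M v).2
    show Dt (v - (Submodule.orthogonalProjection M v : V)) = Dt v
    rw [map_sub, hm, sub_zero]
  set E := ContinuousLinearEquiv.ofBijective S hSinj hSsurj with hEdef
  -- raw inverse into V
  set vraw : U → V := fun u => ((E.symm ⟨Q u, hQmem u⟩ : Mᗮ) : V) with hvdef
  have hDtvraw : ∀ u : U, Dt (vraw u) = Q u := by
    intro u
    have h := ContinuousLinearEquiv.ofBijective_apply_symm_apply S hSinj hSsurj ⟨Q u, hQmem u⟩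
    have h2 := congrArg Subtype.val h
    exact h2
  have hvmem : ∀ u : U, vraw u ∈ LinearMap.range j := by
    intro u
    apply hreg
    rw [hDtvraw]
    exact hQU u
  set F0 : U → U := fun u => (hvmem u).choose with hF0def
  have hjF0 : ∀ u : U, j (F0 u) = vraw u := fun u => (hvmem u).choose_spec
  have hvadd : ∀ a b : U, vraw (a + b) = vraw a + vraw b := by
    intro a b
    have h1 : (⟨Q ((a + b : U) : W), hQmem _⟩ : K) = ⟨Q a, hQmem _⟩ + ⟨Q b, hQmem _⟩ := by
      apply Subtype.ext; push_cast; simp [map_add]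
    rw [hvdef]
    simp only [h1, map_add]
    rfl
  have hvsmul : ∀ (c : ℂ) (a : U), vraw (c • a) = c • vraw a := by
    intro c a
    have h1 : (⟨Q ((c • a : U) : W), hQmem _⟩ : K) = c • ⟨Q a, hQmem _⟩ := by
      apply Subtype.ext; push_cast; simp [map_smul]
    rw [hvdef]
    simp only [h1, map_smul]
    rfl
  set F : U →ₗ[ℂ] U :=
    { toFun := F0
      map_add' := by
        intro a b
        apply hj
        rw [map_add, hjF0, hjF0, hjF0, hvadd]
      map_smul' := by
        intro c a
        apply hj
        rw [RingHom.id_apply, map_smul, hjF0, hjF0, hvsmul] } with hFdef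
  have hDF : ∀ u : U, D (F u) = u - PU u := by
    intro u
    apply Subtype.ext
    have : (D (F u) : W) = Dt (j (F0 u)) := by rw [hDt]; rfl
    rw [this, hjF0, hDtvraw]
    rw [Submodule.coe_sub, hPUapply]
    abel
  -- P fixes ker D
  have hPid : ∀ x : U, x ∈ LinearMap.ker D → PU x = x := by
    intro x hx
    have h1 : D (F x) ∈ LinearMap.ker D := by
      have : D (F x) = x - PU x := hDF x
      rw [this]
      exact (LinearMap.ker D).sub_mem hx (hPker x)
    have h2 : ⟪D (F x), D (F x)⟫ = (0 : ℂ) := horth _ h1 _ ⟨F x, rfl⟩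
    have h3 : D (F x) = 0 := inner_self_eq_zero.mp h2
    have h4 : x - PU x = 0 := by rw [← hDF]; exact h3
    have : PU x = x := by
      have := sub_eq_zero.mp h4
      exact this.symm
    exact this
  -- continuity of F
  have hFcont : Continuous F := by
    refine AddMonoidHomClass.continuous_of_bound F (C * (‖(E.symm : K →L[ℂ] Mᗮ)‖ * ‖Q‖)) fun u => ?_
    have h1 : ‖F u‖ ≤ C * ‖j (F0 u)‖ := hjnorm _
    rw [hjF0] at h1
    have h2 : ‖vraw u‖ ≤ ‖(E.symm : K →L[ℂ] Mᗮ)‖ * ‖(⟨Q u, hQmem u⟩ : K)‖ := by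
      have := (E.symm : K →L[ℂ] Mᗮ).le_opNorm ⟨Q u, hQmem u⟩
      simpa [hvdef] using this
    have h3 : ‖(⟨Q u, hQmem u⟩ : K)‖ ≤ ‖Q‖ * ‖u‖ := by
      have : ‖(⟨Q u, hQmem u⟩ : K)‖ = ‖Q (u : W)‖ := rfl
      rw [this]
      have := Q.le_opNorm (u : W)
      simpa using this
    calc ‖F u‖ ≤ C * ‖vraw u‖ := h1
    _ ≤ C * (‖(E.symm : K →L[ℂ] Mᗮ)‖ * ‖(⟨Q u, hQmem u⟩ : K)‖) := by
        apply mul_le_mul_of_nonneg_left h2 hC.le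
    _ ≤ C * (‖(E.symm : K →L[ℂ] Mᗮ)‖ * (‖Q‖ * ‖u‖)) := by
        apply mul_le_mul_of_nonneg_left _ hC.le
        exact mul_le_mul_of_nonneg_left h3 (norm_nonneg _)
    _ = C * (‖(E.symm : K →L[ℂ] Mᗮ)‖ * ‖Q‖) * ‖u‖ := by ring
  set G : U →ₗ[ℂ] U := F - PU ∘ₗ F with hGdef
  refine ⟨horth, ?_, ?_, G, PU, ?_, hPid, ?_, ?_, ?_, ?_, ?_⟩
  · -- sup = top
    rw [eq_top_iff]
    intro u _
    have : u = PU u + D (F u) := by rw [hDF]; abel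
    rw [this]
    exact Submodule.add_mem _ (Submodule.mem_sup_left (hPker u))
      (Submodule.mem_sup_right ⟨F u, rfl⟩)
  · -- inf = bot
    rw [eq_bot_iff]
    rintro x ⟨hx1, hx2⟩
    have : ⟪x, x⟫ = (0 : ℂ) := horth x hx1 x hx2
    simpa using inner_self_eq_zero.mp this
  · -- G continuous
    have : Continuous (PU ∘ₗ F) := hPUcont.comp hFcont
    rw [hGdef]
    exact hFcont.sub this
  · -- P kills range D
    rintro y ⟨u, rfl⟩
    exact hPrange u
  · -- P symmetric
    intro u v
    rw [Submodule.coe_inner, Submodule.coe_inner, hPUapply, hPUapply]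
    have h1 : ⟪(u : W) - Q u, Q v⟫ = (0 : ℂ) :=
      ((Submodule.mem_orthogonal' _ _).1 (hQorth u)) _ (hQmem _)
    have h2 : ⟪Q u, (v : W) - Q v⟫ = (0 : ℂ) := by
      rw [← inner_conj_symm]
      rw [((Submodule.mem_orthogonal' _ _).1 (hQorth v)) _ (hQmem _)]
      simp
    calc ⟪(u : W) - Q u, (v : W)⟫
        = ⟪(u : W) - Q u, (v : W) - Q v⟫ + ⟪(u : W) - Q u, Q v⟫ := by
          rw [← inner_add_right, sub_add_cancel]
    _ = ⟪(u : W) - Q u, (v : W) - Q v⟫ := by rw [h1, add_zero]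
    _ = ⟪(u : W), (v : W) - Q v⟫ - ⟪Q u, (v : W) - Q v⟫ := by rw [← inner_sub_left]
    _ = ⟪(u : W), (v : W) - Q v⟫ := by rw [h2, sub_zero]
  · -- G ∘ D + P = id
    ext u
    simp only [LinearMap.add_apply, LinearMap.comp_apply, LinearMap.id_apply, hGdef,
      LinearMap.sub_apply]
    have hk : F (D u) - u ∈ LinearMap.ker D := by
      rw [LinearMap.mem_ker, map_sub, hDF, hPrange, sub_zero, sub_self]
    have hfix : PU (F (D u) - u) = F (D u) - u := hPid _ hk
    have : PU (F (D u)) = F (D u) - u + PU u := by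
      have : F (D u) = (F (D u) - u) + u := by abel
      rw [this, map_add, hfix]
      abel
    rw [this]
    exact congrArg Subtype.val (by abel)
  · -- D ∘ G + P = id
    ext u
    simp only [LinearMap.add_apply, LinearMap.comp_apply, LinearMap.id_apply, hGdef,
      LinearMap.sub_apply, map_sub]
    rw [hDF, hPker]
    exact congrArg Subtype.val (by abel)
  · -- D ∘ P = 0
    ext u
    simp only [LinearMap.comp_apply, LinearMap.zero_apply]
    exact congrArg Subtype.val (hPker u)
end
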